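/- arXiv:cs/0006046 — 11 statements merged into one kernel-verified Lean document; each statement's English description precedes it below -/
import Mathlib

section
/- If a graph G contains a chordless cycle C of even length all of whose vertices have degree exactly 3, then G is 3-vertex-colorable if and only if G \ C is 3-vertex-colorable. -/
private def pick3 (x y : Fin 3) : Fin 3 := if x + 1 = y then x + 2 else x + 1

private lemma pick3_ne : ∀ x y : Fin 3, pick3 x y ≠ x ∧ pick3 x y ≠ y := by decide

private lemma fin3_facts : ∀ x : Fin 3, x + 1 ≠ x ∧ x + 2 ≠ x ∧ x + 1 ≠ x + 2 := by decide

private lemma zmod_val_succ {m : ℕ} [NeZero m] (i : ZMod m) :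
    (i + 1).val = i.val + 1 ∨ (i.val + 1 = m ∧ (i + 1).val = 0) := by
  have hvi : i.val < m := ZMod.val_lt i
  have hcast : i + 1 = ((i.val + 1 : ℕ) : ZMod m) := by
    push_cast
    rw [ZMod.natCast_val, ZMod.cast_id]
  by_cases h : i.val + 1 < m
  · left; rw [hcast, ZMod.val_cast_of_lt h]
  · right
    have hm : i.val + 1 = m := by omega
    exact ⟨hm, by rw [hcast, hm, ZMod.natCast_self, ZMod.val_zero]⟩

/-- List coloring of an even cycle with lists of size 2 from three colors:
given a forbidden color `F i` at each position, there is a proper coloring of the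
cycle `ZMod m` avoiding the forbidden colors. -/
private lemma cycle_list_coloring {m : ℕ} [NeZero m] (hmeven : Even m)
    (F : ZMod m → Fin 3) :
    ∃ g : ZMod m → Fin 3, (∀ i, g i ≠ F i) ∧ ∀ i, g i ≠ g (i + 1) := by
  by_cases hconst : ∀ j : ZMod m, F (j + 1) = F j
  · -- constant case: alternate two colors by parity
    have Fconst : ∀ i : ZMod m, F i = F 0 := by
      have hnat : ∀ n : ℕ, F (n : ZMod m) = F 0 := by
        intro n
        induction n with
        | zero => simp
        | succ n ih => rw [Nat.cast_succ, hconst, ih]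
      intro i
      have := hnat i.val
      rwa [ZMod.natCast_val, ZMod.cast_id] at this
    refine ⟨fun i => if Even i.val then F 0 + 1 else F 0 + 2, ?_, ?_⟩
    · intro i
      dsimp only
      rw [Fconst i]
      split
      · exact (fin3_facts (F 0)).1
      · exact (fin3_facts (F 0)).2.1
    · intro i
      dsimp only
      have hpar : Even i.val ↔ ¬ Even ((i + 1).val) := by
        rcases zmod_val_succ i with h | ⟨h1, h2⟩
        · rw [h]; simp [Nat.even_add_one]
        · rw [h2]
          have : ¬ Even i.val := by
            intro he
            have : Odd m := by rw [← h1]; exact Even.add_one he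
            exact (Nat.not_odd_iff_even.mpr hmeven) this
          simp [this]
      by_cases he : Even i.val
      · have := hpar.mp he
        simp only [if_pos he, if_neg this]
        exact (fin3_facts (F 0)).2.2
      · have : Even ((i+1).val) := by by_contra hcon; exact he (hpar.mpr hcon)
        simp only [if_neg he, if_pos this]
        exact Ne.symm (fin3_facts (F 0)).2.2
  · -- non-constant case: greedy from a pivot
    push_neg at hconst
    obtain ⟨j, hj⟩ := hconst
    obtain ⟨h, h0, hs⟩ : ∃ h : ℕ → Fin 3, h 0 = F j ∧
        ∀ k : ℕ, h (k + 1) = pick3 (F (j + 1 + ((k : ZMod m) + 1))) (h k) :=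
      ⟨fun k => Nat.rec (F j) (fun k hk => pick3 (F (j + 1 + ((k : ZMod m) + 1))) hk) k,
        rfl, fun k => rfl⟩
    have key : ∀ i : ZMod m, (((i - j - 1).val : ℕ) : ZMod m) = i - j - 1 := fun i => by
      rw [ZMod.natCast_val, ZMod.cast_id]
    set g : ZMod m → Fin 3 := fun i => h ((i - j - 1).val) with hg
    have P1 : ∀ i, g i ≠ F i := by
      intro i
      have hi : i = j + 1 + (((i - j - 1).val : ℕ) : ZMod m) := by rw [key]; ring
      rw [hg]
      dsimp only
      rcases hk : (i - j - 1).val with _ | k'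
      · have hij1 : i = j + 1 := by rw [hi, hk]; push_cast; ring
        rw [h0, hij1]
        exact Ne.symm hj
      · rw [hs k']
        have heq : j + 1 + ((k' : ZMod m) + 1) = i := by
          rw [hi, hk]; push_cast; ring
        rw [heq]
        exact (pick3_ne _ _).1
    refine ⟨g, P1, ?_⟩
    intro i
    have hsub : (i + 1) - j - 1 = (i - j - 1) + 1 := by ring
    rcases zmod_val_succ (i - j - 1) with hv | ⟨hv1, hv2⟩
    · -- no wraparound
      have hgi1 : g (i + 1) = pick3 (F (j + 1 + ((((i - j - 1).val : ℕ) : ZMod m) + 1))) (g i) := by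
        rw [hg]
        dsimp only
        rw [hsub, hv, hs]
      rw [hgi1]
      exact Ne.symm (pick3_ne _ _).2
    · -- wraparound: i = j
      have hij : i = j := by
        have h1 : (((i - j - 1).val : ℕ) : ZMod m) + 1 = 0 := by
          have h2 : (((i - j - 1).val + 1 : ℕ) : ZMod m) = ((m : ℕ) : ZMod m) := by rw [hv1]
          rw [ZMod.natCast_self] at h2
          push_cast at h2
          exact h2
        rw [key] at h1
        linear_combination h1
      have hgj1 : g (j + 1) = F j := by
        rw [hg]
        dsimp only
        have hz : j + 1 - j - 1 = (0 : ZMod m) := by ring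
        rw [hz, ZMod.val_zero, h0]
      have hP := P1 i
      rw [hij] at hP ⊢
      rw [hgj1]
      exact hP

private lemma walk_support_eq_map {V : Type} {G : SimpleGraph V} {u w : V} (p : G.Walk u w) :
    p.support = (List.range (p.length + 1)).map p.getVert := by
  induction p with
  | nil => rfl
  | @cons a b c h q ih =>
    have key : List.map (SimpleGraph.Walk.cons h q).getVert (List.range (q.length + 1 + 1))
        = a :: List.map q.getVert (List.range (q.length + 1)) := by
      rw [List.range_succ_eq_map]
      simp [List.map_map, Function.comp_def, SimpleGraph.Walk.getVert_cons_succ]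
    rw [SimpleGraph.Walk.length_cons, key, SimpleGraph.Walk.support_cons, ih]

/-- If a graph `G` contains a chordless cycle `c` of even length all of whose vertices
have degree exactly 3, then `G` is 3-colorable iff `G` minus the cycle vertices is
3-colorable. -/
theorem stmt0 {V : Type} [Fintype V] [DecidableEq V] (G : SimpleGraph V) [DecidableRel G.Adj]
    (v : V) (c : G.Walk v v) (hc : c.IsCycle)
    (hchordless : ∀ a b : V, a ∈ c.support → b ∈ c.support → G.Adj a b → s(a, b) ∈ c.edges)
    (hdeg : ∀ a ∈ c.support, G.degree a = 3)
    (heven : Even c.length) :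
    G.Colorable 3 ↔ (G.induce {x : V | x ∉ c.support}).Colorable 3 := by
  constructor
  · intro h
    exact SimpleGraph.Colorable.of_hom (SimpleGraph.Embedding.induce _).toHom h
  rintro ⟨C'⟩
  classical
  set m := c.length with hmdef
  have hm3 : 3 ≤ m := hc.three_le_length
  have hm4 : 4 ≤ m := by obtain ⟨t, ht⟩ := heven; omega
  haveI : NeZero m := ⟨by omega⟩
  set d : ℕ → V := c.getVert with hddef
  have hd0 : d m = d 0 := by
    rw [hddef]
    simp only [hmdef, SimpleGraph.Walk.getVert_length, SimpleGraph.Walk.getVert_zero]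
  set D : ZMod m → V := fun i => d i.val with hD
  -- cast compatibility
  have DC : ∀ k : ℕ, k ≤ m → d k = D ((k : ℕ) : ZMod m) := by
    intro k hk
    by_cases h : k < m
    · rw [hD]; dsimp only; rw [ZMod.val_cast_of_lt h]
    · have : k = m := by omega
      subst this
      rw [hD]; dsimp only
      rw [ZMod.natCast_self, ZMod.val_zero, hd0]
  have hvadd : ∀ i : ZMod m, ((i + 1).val = i.val + 1) ∨ (i.val + 1 = m ∧ (i + 1).val = 0) :=
    fun i => zmod_val_succ i
  have hDadd : ∀ i : ZMod m, D (i + 1) = d (i.val + 1) := by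
    intro i
    rcases hvadd i with h | ⟨h1, h2⟩
    · rw [hD]; dsimp only; rw [h]
    · rw [hD]; dsimp only; rw [h2, h1, hd0]
  have Dadj : ∀ i : ZMod m, G.Adj (D i) (D (i + 1)) := by
    intro i
    rw [hDadd]
    exact c.adj_getVert_succ (ZMod.val_lt i)
  have Dmem : ∀ i : ZMod m, D i ∈ c.support := by
    intro i
    exact SimpleGraph.Walk.mem_support_iff_exists_getVert.mpr
      ⟨i.val, rfl, le_of_lt (ZMod.val_lt i)⟩
  -- injectivity of the cycle parametrization
  have hinj1 : ∀ k1 ∈ List.range m, ∀ k2 ∈ List.range m, d (k1 + 1) = d (k2 + 1) → k1 = k2 := by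
    have hnodup := hc.support_nodup
    rw [walk_support_eq_map, List.range_succ_eq_map] at hnodup
    simp only [List.map_cons, List.tail_cons, List.map_map] at hnodup
    exact List.inj_on_of_nodup_map hnodup
  have Dinj : Function.Injective D := by
    intro i j hij
    have hvi := ZMod.val_lt i
    have hvj := ZMod.val_lt j
    set ei : ℕ := if i.val = 0 then m - 1 else i.val - 1 with hei
    set ej : ℕ := if j.val = 0 then m - 1 else j.val - 1 with hej
    have hdi : d (ei + 1) = D i := by
      rw [hei, hD]; dsimp only
      split
      · next h => rw [show m - 1 + 1 = m by omega, hd0, h]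
      · next h => rw [show i.val - 1 + 1 = i.val by omega]
    have hdj : d (ej + 1) = D j := by
      rw [hej, hD]; dsimp only
      split
      · next h => rw [show m - 1 + 1 = m by omega, hd0, h]
      · next h => rw [show j.val - 1 + 1 = j.val by omega]
    have heij : ei = ej := by
      apply hinj1 ei (List.mem_range.mpr (by rw [hei]; split <;> omega))
        ej (List.mem_range.mpr (by rw [hej]; split <;> omega))
      rw [hdi, hdj, hij]
    have : i.val = j.val := by
      rw [hei, hej] at heij
      split at heij <;> split at heij <;> omega
    exact ZMod.val_injective m this
  -- edges of the cycle are exactly consecutive pairs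
  have Dedge : ∀ i i' : ZMod m, G.Adj (D i) (D i') → i' = i + 1 ∨ i = i' + 1 := by
    intro i i' hadj
    have hmemE := hchordless (D i) (D i') (Dmem i) (Dmem i') hadj
    rw [← SimpleGraph.Walk.mem_edges_toSubgraph, SimpleGraph.Subgraph.mem_edgeSet,
      SimpleGraph.Walk.toSubgraph_adj_iff] at hmemE
    obtain ⟨k, hk, hkm⟩ := hmemE
    have hdk : c.getVert k = D ((k : ℕ) : ZMod m) := DC k (le_of_lt hkm)
    have hdk1 : c.getVert (k + 1) = D (((k : ℕ) : ZMod m) + 1) := by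
      rw [hDadd, ZMod.val_cast_of_lt hkm]
    rw [Sym2.eq_iff] at hk
    rcases hk with ⟨h1, h2⟩ | ⟨h1, h2⟩
    · left
      rw [hdk] at h1
      rw [hdk1] at h2
      rw [← Dinj h1, ← Dinj h2]
    · right
      rw [hdk] at h1
      rw [hdk1] at h2
      rw [← Dinj h1, ← Dinj h2]
  -- each cycle vertex has at most one neighbor off the cycle
  have hext : ∀ i : ZMod m, ∀ b b' : V, b ∉ c.support → b' ∉ c.support →
      G.Adj (D i) b → G.Adj (D i) b' → b = b' := by
    intro i b b' hb hb' hab hab'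
    by_contra hne
    have h1 : G.Adj (D i) (D (i + 1)) := Dadj i
    have h2 : G.Adj (D i) (D (i - 1)) := by
      have := Dadj (i - 1)
      rw [show i - 1 + 1 = i from by ring] at this
      exact this.symm
    have hne12 : D (i + 1) ≠ D (i - 1) := by
      intro h
      have h21 := Dinj h
      have h2z : ((2 : ℕ) : ZMod m) = 0 := by push_cast; linear_combination h21
      rw [ZMod.natCast_eq_zero_iff] at h2z
      have := Nat.le_of_dvd (by norm_num) h2z
      omega
    have hb1 : D (i + 1) ≠ b := fun h => hb (h ▸ Dmem (i + 1))
    have hb'1 : D (i + 1) ≠ b' := fun h => hb' (h ▸ Dmem (i + 1))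
    have hb2 : D (i - 1) ≠ b := fun h => hb (h ▸ Dmem (i - 1))
    have hb'2 : D (i - 1) ≠ b' := fun h => hb' (h ▸ Dmem (i - 1))
    have hsubn : ({D (i + 1), D (i - 1), b, b'} : Finset V) ⊆ G.neighborFinset (D i) := by
      intro x hx
      simp only [Finset.mem_insert, Finset.mem_singleton] at hx
      rw [SimpleGraph.mem_neighborFinset]
      rcases hx with rfl | rfl | rfl | rfl
      exacts [h1, h2, hab, hab']
    have hcard : ({D (i + 1), D (i - 1), b, b'} : Finset V).card = 4 := by
      rw [Finset.card_insert_of_notMem (by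
            simp only [Finset.mem_insert, Finset.mem_singleton]; push_neg
            exact ⟨hne12, hb1, hb'1⟩),
          Finset.card_insert_of_notMem (by
            simp only [Finset.mem_insert, Finset.mem_singleton]; push_neg
            exact ⟨hb2, hb'2⟩),
          Finset.card_insert_of_notMem (by
            simp only [Finset.mem_singleton]; exact hne),
          Finset.card_singleton]
    have hle := Finset.card_le_card hsubn
    rw [hcard] at hle
    have hdeg3 : G.degree (D i) = 3 := hdeg _ (Dmem i)
    rw [SimpleGraph.degree] at hdeg3
    omega
  -- forbidden colors coming from the external neighbors
  set F : ZMod m → Fin 3 := fun i =>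
    if h : ∃ b, ∃ _ : b ∉ c.support, G.Adj (D i) b then
      C' ⟨h.choose, h.choose_spec.choose⟩ else 0 with hFdef
  have hF : ∀ (i : ZMod m) (b : V) (hb : b ∉ c.support), G.Adj (D i) b →
      F i = C' ⟨b, hb⟩ := by
    intro i b hb hadj
    have hex : ∃ b, ∃ _ : b ∉ c.support, G.Adj (D i) b := ⟨b, hb, hadj⟩
    rw [hFdef]
    dsimp only
    rw [dif_pos hex]
    have heq : hex.choose = b :=
      hext i hex.choose b hex.choose_spec.choose hb hex.choose_spec.choose_spec hadj
    subst heq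
    rfl
  -- the cycle coloring
  obtain ⟨g, hg1, hg2⟩ := cycle_list_coloring heven F
  -- the full coloring
  have hDsurj : ∀ x : V, x ∈ c.support → ∃ i : ZMod m, D i = x := by
    intro x hx
    obtain ⟨n, hn, hnm⟩ := SimpleGraph.Walk.mem_support_iff_exists_getVert.mp hx
    exact ⟨((n : ℕ) : ZMod m), by rw [← DC n hnm]; exact hn⟩
  set col : V → Fin 3 := fun x =>
    if hx : x ∈ c.support then g (hDsurj x hx).choose else C' ⟨x, hx⟩ with hcol
  refine ⟨SimpleGraph.Coloring.mk col ?_⟩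
  intro x y hadj
  rw [hcol]
  dsimp only
  by_cases hx : x ∈ c.support <;> by_cases hy : y ∈ c.support
  · rw [dif_pos hx, dif_pos hy]
    have hix : D (hDsurj x hx).choose = x := (hDsurj x hx).choose_spec
    have hiy : D (hDsurj y hy).choose = y := (hDsurj y hy).choose_spec
    have hDD : G.Adj (D (hDsurj x hx).choose) (D (hDsurj y hy).choose) := by
      rw [hix, hiy]; exact hadj
    rcases Dedge _ _ hDD with h | h
    · rw [h]; exact hg2 _
    · rw [h]; exact Ne.symm (hg2 _)
  · rw [dif_pos hx, dif_neg hy]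
    have hix : D (hDsurj x hx).choose = x := (hDsurj x hx).choose_spec
    have := hF (hDsurj x hx).choose y hy (by rw [hix]; exact hadj)
    rw [← this]
    exact hg1 _
  · rw [dif_neg hx, dif_pos hy]
    have hiy : D (hDsurj y hy).choose = y := (hDsurj y hy).choose_spec
    have := hF (hDsurj y hy).choose x hx (by rw [hiy]; exact hadj.symm)
    rw [← this]
    exact Ne.symm (hg1 _)
  · rw [dif_neg hx, dif_neg hy]
    exact C'.valid (by simp only [SimpleGraph.comap_adj]; exact hadj)
end

section
/- Let C = v_1, ..., v_k be a chordless cycle of degree-3 vertices in a graph G, and let w_i be the unique neighbor of v_i outside C. If for some i, w_i and w_{i+1} (indices mod k) are adjacent in G, then G is 3-vertex-colorable if and only if G \ C is 3-vertex-colorable. -/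
/-!
Color `G \ C` with three colors and extend along the cycle greedily, starting right after the
edge `w i₀ w (i₀ + 1)`: the first cycle vertex `v (i₀ + 1)` takes the color of `w i₀`, which is
free because `w (i₀ + 1)` has a different color. Each later vertex only has to avoid its
predecessor and its outside neighbor. The last vertex `v i₀` sees three colored neighbors, but two
of them, `w i₀` and `v (i₀ + 1)`, share a color.
-/

open SimpleGraph

theorem Fin.exists_ne_and_ne_three : ∀ a b : Fin 3, ∃ c, c ≠ a ∧ c ≠ b := by decide

theorem exists_path_coloring_avoiding {α : Type*} (third : ∀ a b : α, ∃ c, c ≠ a ∧ c ≠ b)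
    (forbidden : ℕ → α) {a : α} (ha : a ≠ forbidden 0) :
    ∃ g : ℕ → α, g 0 = a ∧ (∀ n, g (n + 1) ≠ g n) ∧ ∀ n, g n ≠ forbidden n := by
  choose pick hpick₁ hpick₂ using third
  let g : ℕ → α := fun n => Nat.rec a (fun n prev => pick (forbidden (n + 1)) prev) n
  refine ⟨g, rfl, fun n => hpick₂ _ _, fun n => ?_⟩
  cases n with
  | zero => exact ha
  | succ n => exact hpick₁ _ _

theorem ZMod.val_add_one_eq_or {k : ℕ} [NeZero k] (j : ZMod k) :
    (j + 1).val = j.val + 1 ∨ j + 1 = 0 := by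
  have hcast : ((j.val + 1 : ℕ) : ZMod k) = j + 1 := by push_cast [ZMod.natCast_zmod_val]; rfl
  by_cases hlt : j.val + 1 < k
  · left
    rw [← hcast, ZMod.val_cast_of_lt hlt]
  · right
    rw [← hcast, show j.val + 1 = k by have := j.val_lt; omega, ZMod.natCast_self]

theorem exists_cycle_coloring_avoiding {α : Type*} (third : ∀ a b : α, ∃ c, c ≠ a ∧ c ≠ b)
    {k : ℕ} [NeZero k] (forbidden : ZMod k → α) {i₀ : ZMod k}
    (h : forbidden i₀ ≠ forbidden (i₀ + 1)) :
    ∃ f : ZMod k → α, (∀ i, f i ≠ f (i + 1)) ∧ ∀ i, f i ≠ forbidden i := by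
  obtain ⟨g, hg_zero, hg_succ, hg_forbidden⟩ :=
    exists_path_coloring_avoiding third (fun n => forbidden (i₀ + 1 + n)) (a := forbidden i₀)
      (by simpa using h)
  refine ⟨fun i => g (i - (i₀ + 1)).val, fun i => ?_, fun i => by
    simpa [ZMod.natCast_zmod_val] using hg_forbidden (i - (i₀ + 1)).val⟩
  dsimp only
  rcases ZMod.val_add_one_eq_or (i - (i₀ + 1)) with hsucc | hwrap
  · rw [show i + 1 - (i₀ + 1) = i - (i₀ + 1) + 1 by ring, hsucc]
    exact (hg_succ _).symm
  · -- wrap-around: `f (i₀ + 1) = g 0 = forbidden i₀`, which `f i₀` avoids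
    obtain rfl : i = i₀ := by linear_combination hwrap
    simpa [hg_zero, ZMod.natCast_zmod_val] using hg_forbidden (i - (i + 1)).val

namespace SimpleGraph

variable {V : Type*} {G : SimpleGraph V}

theorem eq_or_eq_or_eq_of_adj_of_degree_eq_three {x a b c y : V} [Fintype (G.neighborSet x)]
    (hdeg : G.degree x = 3) (ha : G.Adj x a) (hb : G.Adj x b) (hc : G.Adj x c)
    (hab : a ≠ b) (hac : a ≠ c) (hbc : b ≠ c) (hy : G.Adj x y) : y = a ∨ y = b ∨ y = c := by
  classical
  have hsub : ({a, b, c} : Finset V) ⊆ G.neighborFinset x := by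
    simp [Finset.insert_subset_iff, ha, hb, hc]
  have heq := Finset.eq_of_subset_of_card_le hsub <| by
    rw [card_neighborFinset_eq_degree, hdeg, Finset.card_eq_three.2 ⟨a, b, c, hab, hac, hbc, rfl⟩]
  simpa [← heq] using (G.mem_neighborFinset x y).2 hy

theorem nonempty_coloring_of_extend_induce_compl_range {α ι : Type*} {v : ι → V}
    (hinj : Function.Injective v) (c : (G.induce {x | x ∉ Set.range v}).Coloring α) (f : ι → α)
    (hf_inner : ∀ i j, G.Adj (v i) (v j) → f i ≠ f j)
    (hf_outer : ∀ i x (hx : x ∉ Set.range v), G.Adj (v i) x → f i ≠ c ⟨x, hx⟩) :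
    Nonempty (G.Coloring α) := by
  classical
  let col : V → α := fun x => if hx : x ∈ Set.range v then f hx.choose else c ⟨x, hx⟩
  have col_range : ∀ i, col (v i) = f i := fun i => by
    simp only [col, dif_pos (Set.mem_range_self i)]
    exact congrArg f (hinj (Set.mem_range_self i).choose_spec)
  have col_compl : ∀ x (hx : x ∉ Set.range v), col x = c ⟨x, hx⟩ := fun x hx => dif_neg hx
  have col_ne_of_adj_range : ∀ i y, G.Adj (v i) y → col (v i) ≠ col y := by
    intro i y hy
    by_cases hy_range : y ∈ Set.range v
    · obtain ⟨j, rfl⟩ := hy_range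
      rw [col_range, col_range]
      exact hf_inner i j hy
    · rw [col_range, col_compl y hy_range]
      exact hf_outer i y hy_range hy
  refine ⟨Coloring.mk col fun {x y} hxy => ?_⟩
  by_cases hx : x ∈ Set.range v
  · obtain ⟨i, rfl⟩ := hx
    exact col_ne_of_adj_range i y hxy
  by_cases hy : y ∈ Set.range v
  · obtain ⟨j, rfl⟩ := hy
    exact (col_ne_of_adj_range j x hxy.symm).symm
  rw [col_compl x hx, col_compl y hy]
  exact c.valid (by simpa using hxy)

end SimpleGraph

theorem stmt1_general {V : Type} [Fintype V] (G : SimpleGraph V) [DecidableRel G.Adj]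
    (k : ℕ) (hk : 3 ≤ k) (v w : ZMod k → V)
    (hinj : Function.Injective v)
    (hcyc : ∀ i, G.Adj (v i) (v (i + 1)))
    (hchordless : ∀ i j, G.Adj (v i) (v j) → j = i + 1 ∨ i = j + 1)
    (hdeg : ∀ i, G.degree (v i) = 3)
    (hw : ∀ i, G.Adj (v i) (w i) ∧ w i ∉ Set.range v)
    (hadj : ∃ i, G.Adj (w i) (w (i + 1))) :
    G.Colorable 3 ↔ (G.induce {x : V | x ∉ Set.range v}).Colorable 3 := by
  have : Fact (2 < k) := ⟨hk⟩
  have : NeZero k := ⟨by omega⟩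
  refine ⟨fun h => h.of_hom (Embedding.induce _).toHom, fun ⟨c⟩ => ?_⟩
  have h_outside_nbr : ∀ i x, x ∉ Set.range v → G.Adj (v i) x → x = w i := by
    intro i x hx hix
    have hpred : G.Adj (v i) (v (i - 1)) := by simpa using (hcyc (i - 1)).symm
    have hpred_succ : v (i - 1) ≠ v (i + 1) := hinj.ne fun h =>
      ZMod.neg_one_ne_one (n := k) (by linear_combination h)
    rcases G.eq_or_eq_or_eq_of_adj_of_degree_eq_three (hdeg i) hpred (hcyc i) (hw i).1
      hpred_succ (fun h => (hw i).2 ⟨_, h⟩) (fun h => (hw i).2 ⟨_, h⟩) hix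
      with rfl | rfl | rfl
    · exact absurd (Set.mem_range_self _) hx
    · exact absurd (Set.mem_range_self _) hx
    · rfl
  obtain ⟨i₀, hi₀⟩ := hadj
  obtain ⟨f, hf_succ, hf_outer⟩ :=
    exists_cycle_coloring_avoiding Fin.exists_ne_and_ne_three (fun i => c ⟨w i, (hw i).2⟩)
      (i₀ := i₀) (c.valid (by simpa using hi₀))
  refine G.nonempty_coloring_of_extend_induce_compl_range hinj c f (fun i j hij => ?_)
    (fun i x hx hix => ?_)
  · rcases hchordless i j hij with rfl | rfl
    exacts [hf_succ i, (hf_succ j).symm]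
  · obtain rfl := h_outside_nbr i x hx hix
    exact hf_outer i

/-- Let `v 0, ..., v (k-1)` be a chordless cycle of degree-3 vertices in `G`, and `w i`
the (unique) neighbor of `v i` outside the cycle.  If some `w i` and `w (i+1)` are
adjacent, then `G` is 3-colorable iff `G` minus the cycle is 3-colorable. -/
theorem stmt1 {V : Type} [Fintype V] [DecidableEq V] (G : SimpleGraph V) [DecidableRel G.Adj]
    (k : ℕ) (hk : 3 ≤ k) (v w : ZMod k → V)
    (hinj : Function.Injective v)
    (hcyc : ∀ i, G.Adj (v i) (v (i + 1)))
    (hchordless : ∀ i j, G.Adj (v i) (v j) → j = i + 1 ∨ i = j + 1)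
    (hdeg : ∀ i, G.degree (v i) = 3)
    (hw : ∀ i, G.Adj (v i) (w i) ∧ w i ∉ Set.range v)
    (hadj : ∃ i, G.Adj (w i) (w (i + 1))) :
    G.Colorable 3 ↔ (G.induce {x : V | x ∉ Set.range v}).Colorable 3 :=
  stmt1_general G k hk v w hinj hcyc hchordless hdeg hw hadj
end

section
/- In a simple graph with n vertices and maximum degree at most 3, if m_3 denotes the number of edges with exactly 3 neighboring edges, m_4 the number of edges with exactly 4 neighboring edges, and every edge has exactly 3 or 4 neighboring edges, then m_3 = (6/5)n - (4/5)m_4. -/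
/-!
Counting darts by their tails, `∑ v, (deg v)² = ∑ over edges uv of (deg u + deg v)`, and an edge
with `k` neighbouring edges contributes `k + 2`. The hypotheses force every degree into `{2, 3}`,
where `d² = 5d - 6`; combined with the handshake lemma `∑ v, deg v = 2 (m₃ + m₄)` this gives
`5 m₃ + 4 m₄ = 6 n`.
-/

open Finset

def edgeNbrs {V : Type} [Fintype V] [DecidableEq V] (G : SimpleGraph V) [DecidableRel G.Adj] :
    Sym2 V → ℕ :=
  Sym2.lift ⟨fun a b => G.degree a + G.degree b - 2, fun a b => by simp [add_comm]⟩

theorem Finset.sum_comp_eq_of_forall_eq_or_eq {ι κ M : Type*} [AddCommMonoid M] [DecidableEq κ]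
    {s : Finset ι} {f : ι → κ} {a b : κ} (hab : a ≠ b) (h : ∀ x ∈ s, f x = a ∨ f x = b)
    (g : κ → M) :
    ∑ x ∈ s, g (f x) = #{x ∈ s | f x = a} • g a + #{x ∈ s | f x = b} • g b := by
  have hnot : {x ∈ s | ¬f x = a} = {x ∈ s | f x = b} :=
    filter_congr fun x hx => by rcases h x hx with hx | hx <;> simp [hx, hab, hab.symm]
  rw [← sum_filter_add_sum_filter_not s (f · = a), hnot,
    sum_congr rfl fun x hx => congrArg g (mem_filter.1 hx).2,
    sum_congr rfl fun x hx => congrArg g (mem_filter.1 hx).2, sum_const, sum_const]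

namespace SimpleGraph

section DartSums

variable {V : Type*} [Fintype V] [DecidableEq V] (G : SimpleGraph V) [DecidableRel G.Adj]

theorem sum_dart_fst {M : Type*} [AddCommMonoid M] (f : V → M) :
    ∑ d : G.Dart, f d.fst = ∑ v, G.degree v • f v := by
  rw [← sum_fiberwise_of_maps_to (g := fun d : G.Dart => d.fst) (t := univ) fun _ _ => mem_univ _]
  refine sum_congr rfl fun v _ => ?_
  rw [sum_congr rfl fun d hd => congrArg f (mem_filter.1 hd).2, sum_const,
    dart_fst_fiber_card_eq_degree]

theorem sum_dart_fst_eq_sum_edgeFinset {M : Type*} [AddCommMonoid M] (f : V → M) :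
    ∑ d : G.Dart, f d.fst =
      ∑ e ∈ G.edgeFinset, Sym2.lift ⟨fun a b => f a + f b, fun _ _ => add_comm _ _⟩ e := by
  rw [← sum_fiberwise_of_maps_to (g := Dart.edge) fun d _ => mem_edgeFinset.2 d.edge_mem]
  refine sum_congr rfl fun e he => ?_
  induction e with
  | _ u v =>
    let d : G.Dart := ⟨(u, v), mem_edgeFinset.1 he⟩
    have hfiber : ({d' : G.Dart | d'.edge = s(u, v)} : Finset _) = {d, d.symm} := d.edge_fiber
    rw [hfiber, sum_pair d.symm_ne.symm]
    rfl

theorem sum_degree_mul_self_eq_sum_edgeFinset :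
    ∑ v, G.degree v * G.degree v =
      ∑ e ∈ G.edgeFinset,
        Sym2.lift ⟨fun a b => G.degree a + G.degree b, fun _ _ => add_comm _ _⟩ e :=
  (G.sum_dart_fst (G.degree ·)).symm.trans (G.sum_dart_fst_eq_sum_edgeFinset (G.degree ·))

end DartSums

variable {V : Type} [Fintype V] [DecidableEq V] {G : SimpleGraph V} [DecidableRel G.Adj]

theorem edgeNbrs_add_two {e : Sym2 V} (he : e ∈ G.edgeFinset) :
    edgeNbrs G e + 2 =
      Sym2.lift ⟨fun a b => G.degree a + G.degree b, fun _ _ => add_comm _ _⟩ e := by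
  induction e with
  | _ u v =>
    have huv : G.Adj u v := mem_edgeFinset.1 he
    have hu := G.degree_pos_iff_exists_adj u |>.2 ⟨v, huv⟩
    have hv := G.degree_pos_iff_exists_adj v |>.2 ⟨u, huv.symm⟩
    simp only [edgeNbrs, Sym2.lift_mk]
    omega

theorem two_le_degree (hmax : ∀ v, G.degree v ≤ 3) (hnb : ∀ e ∈ G.edgeFinset, 3 ≤ edgeNbrs G e)
    {v : V} (hv : 1 ≤ G.degree v) : 2 ≤ G.degree v := by
  obtain ⟨u, hvu⟩ := (G.degree_pos_iff_exists_adj v).1 hv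
  have h := hnb s(v, u) (mem_edgeFinset.2 hvu)
  simp only [edgeNbrs, Sym2.lift_mk] at h
  have := hmax u
  omega

end SimpleGraph

open SimpleGraph

/-- In a graph with `n` vertices, maximum degree at most 3, no isolated vertices, in which
every edge has exactly 3 or exactly 4 neighboring edges, the number `m₃` of edges with 3
neighbors satisfies `m₃ = (6/5)n - (4/5)m₄`, `m₄` being the number of edges with 4 neighbors. -/
theorem stmt4 {V : Type} [Fintype V] [DecidableEq V] (G : SimpleGraph V) [DecidableRel G.Adj]
    (hmax : ∀ v, G.degree v ≤ 3)
    (hmin : ∀ v, 1 ≤ G.degree v)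
    (hnb : ∀ e ∈ G.edgeFinset, edgeNbrs G e = 3 ∨ edgeNbrs G e = 4) :
    ((G.edgeFinset.filter (fun e => edgeNbrs G e = 3)).card : ℚ) =
      6 / 5 * (Fintype.card V : ℚ) -
        4 / 5 * ((G.edgeFinset.filter (fun e => edgeNbrs G e = 4)).card : ℚ) := by
  set m₃ := #{e ∈ G.edgeFinset | edgeNbrs G e = 3}
  set m₄ := #{e ∈ G.edgeFinset | edgeNbrs G e = 4}
  have hdeg (v : V) : G.degree v * G.degree v + 6 = 5 * G.degree v := by
    have hlow := two_le_degree hmax (fun e he => by rcases hnb e he with h | h <;> omega) (hmin v)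
    have hhigh := hmax v
    interval_cases G.degree v <;> rfl
  have hsq : ∑ v, G.degree v * G.degree v + 6 * Fintype.card V = 5 * ∑ v, G.degree v := by
    rw [mul_sum, ← sum_congr rfl fun v _ => hdeg v, sum_add_distrib, sum_const, card_univ,
      smul_eq_mul, mul_comm]
  have hedges : ∑ v, G.degree v * G.degree v = m₃ • 5 + m₄ • 6 := by
    rw [sum_degree_mul_self_eq_sum_edgeFinset, ← sum_congr rfl fun e he => edgeNbrs_add_two he]
    exact sum_comp_eq_of_forall_eq_or_eq (by decide) hnb (· + 2)
  have hcard : #G.edgeFinset = m₃ • 1 + m₄ • 1 := by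
    rw [card_eq_sum_ones]
    exact sum_comp_eq_of_forall_eq_or_eq (by decide) hnb fun _ => 1
  have hcount : 5 * m₃ + 4 * m₄ = 6 * Fintype.card V := by
    have handshake := G.sum_degrees_eq_twice_card_edges
    simp only [smul_eq_mul] at hedges hcard
    omega
  have hcount' : (5 * m₃ + 4 * m₄ : ℚ) = 6 * Fintype.card V := by exact_mod_cast hcount
  linarith
end

section
/- In a (3,2)-CSP instance, suppose variable v has only two allowed colors R and G. Form a new instance by deleting v and adding, for every pair of constraints ((u,A),(v,R)) and ((w,B),(v,G)) with u,w ≠ v, the constraint ((u,A),(w,B)). Then the original instance is solvable if and only if the new instance is solvable. -/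
/-- A binary constraint satisfaction instance: each variable has a set of allowed colors,
and each constraint forbids one specific pair of (variable,color) choices from occurring
simultaneously. -/
structure CSP (V C : Type) where
  allowed : V → Set C
  constraints : Set ((V × C) × (V × C))

/-- `f` is a solution: it picks an allowed color for every variable and violates no
constraint. -/
def CSP.Satisfies {V C : Type} (I : CSP V C) (f : V → C) : Prop :=
  (∀ v, f v ∈ I.allowed v) ∧
  ∀ pq ∈ I.constraints, ¬(f pq.1.1 = pq.1.2 ∧ f pq.2.1 = pq.2.2)

/-- An instance is solvable if it has a solution. -/
def CSP.Solvable {V C : Type} (I : CSP V C) : Prop := ∃ f, I.Satisfies f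

/-- Elimination of a two-color variable in a (3,2)-CSP instance: if variable `v` allows only
the two colors `R`, `G`, delete `v` and add, for each pair of constraints pairing some
`(u,A)` with `(v,R)` and some `(w,B)` with `(v,G)` (`u, w ≠ v`), the constraint
`((u,A),(w,B))`.  The resulting instance is solvable iff the original one is. -/
theorem stmt10 {V C : Type} (I : CSP V C)
    (h3 : ∀ u, (I.allowed u).ncard ≤ 3)
    (hdist : ∀ p q : V × C, (p, q) ∈ I.constraints → p.1 ≠ q.1)
    (v : V) (R G : C) (hRG : R ≠ G) (hv : I.allowed v = {R, G}) :
    I.Solvable ↔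
      CSP.Solvable
        { allowed := fun u : {u : V // u ≠ v} => I.allowed u.1
          constraints :=
            {pq : ({u : V // u ≠ v} × C) × ({u : V // u ≠ v} × C) |
              ((pq.1.1.1, pq.1.2), (pq.2.1.1, pq.2.2)) ∈ I.constraints ∨
              ((((pq.1.1.1, pq.1.2), (v, R)) ∈ I.constraints ∨
                ((v, R), (pq.1.1.1, pq.1.2)) ∈ I.constraints) ∧
               (((pq.2.1.1, pq.2.2), (v, G)) ∈ I.constraints ∨
                ((v, G), (pq.2.1.1, pq.2.2)) ∈ I.constraints))} } := by
  classical
  constructor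
  · rintro ⟨f, hf, hc⟩
    refine ⟨fun u => f u.1, fun u => hf u.1, ?_⟩
    rintro ⟨⟨⟨u, hu⟩, A⟩, ⟨⟨w, hw⟩, B⟩⟩ hpq ⟨h1, h2⟩
    simp only [Set.mem_setOf_eq] at hpq
    simp only at h1 h2
    rcases hpq with h | ⟨hR, hG⟩
    · exact hc _ h ⟨h1, h2⟩
    · have hfv : f v = R ∨ f v = G := by
        have := hf v; rw [hv] at this; exact this
      rcases hfv with hR' | hG'
      · rcases hR with h | h
        · exact hc _ h ⟨h1, hR'⟩
        · exact hc _ h ⟨hR', h1⟩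
      · rcases hG with h | h
        · exact hc _ h ⟨h2, hG'⟩
        · exact hc _ h ⟨hG', h2⟩
  · rintro ⟨g, hg, hc⟩
    set P : Prop := ∀ (u : V) (hu : u ≠ v) (A : C),
      (((u, A), (v, R)) ∈ I.constraints ∨ ((v, R), (u, A)) ∈ I.constraints) →
        g ⟨u, hu⟩ ≠ A with hP
    refine ⟨fun u => if h : u = v then (if P then R else G) else g ⟨u, h⟩, ?_, ?_⟩
    · intro u
      by_cases h : u = v
      · subst h
        simp only [dif_pos rfl]
        rw [hv]
        by_cases hPc : P
        · rw [if_pos hPc]; exact Or.inl rfl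
        · rw [if_neg hPc]; exact Or.inr rfl
      · simp only [dif_neg h]
        exact hg ⟨u, h⟩
    · rintro ⟨⟨u, A⟩, ⟨w, B⟩⟩ hpq ⟨h1, h2⟩
      simp only at h1 h2
      have huw : u ≠ w := hdist _ _ hpq
      by_cases hu : u = v
      · have hw : w ≠ v := fun h => huw (hu.trans h.symm)
        rw [hu] at hpq
        rw [dif_pos hu] at h1
        rw [dif_neg hw] at h2
        by_cases hPc : P
        · rw [if_pos hPc] at h1
          subst h1
          exact hPc w hw B (Or.inr hpq) h2
        · rw [if_neg hPc] at h1
          subst h1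
          rw [hP] at hPc
          push_neg at hPc
          obtain ⟨u', hu', A', hcon, hg'⟩ := hPc
          refine hc ((⟨u', hu'⟩, A'), (⟨w, hw⟩, B)) ?_ ⟨hg', h2⟩
          exact Or.inr ⟨hcon, Or.inr hpq⟩
      · rw [dif_neg hu] at h1
        by_cases hw : w = v
        · rw [hw] at hpq
          rw [dif_pos hw] at h2
          by_cases hPc : P
          · rw [if_pos hPc] at h2
            subst h2
            exact hPc u hu A (Or.inl hpq) h1
          · rw [if_neg hPc] at h2
            subst h2
            rw [hP] at hPc
            push_neg at hPc
            obtain ⟨u', hu', A', hcon, hg'⟩ := hPc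
            refine hc ((⟨u', hu'⟩, A'), (⟨u, hu⟩, A)) ?_ ⟨hg', h1⟩
            exact Or.inr ⟨hcon, Or.inl hpq⟩
        · rw [dif_neg hw] at h2
          exact hc ((⟨u, hu⟩, A), (⟨w, hw⟩, B)) (Or.inl hpq) ⟨h1, h2⟩
end

section
/- In an (a,2)-CSP instance, suppose the pair (v,B) is 'dominated' by (v,R): whenever ((v,R),(w,X)) is a constraint, so is ((v,B),(w,X)). Then the instance is solvable if and only if the instance obtained by removing color B from the allowed list of v is solvable. -/
/-- Domination in an (a,2)-CSP instance: if whenever `((v,R),(w,X))` is a constraint so is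
`((v,B),(w,X))`, then the instance is solvable iff the instance with color `B` removed from
`v`'s list is solvable. -/
theorem stmt11 {V C : Type} [DecidableEq V] (a : ℕ) (I : CSP V C)
    (ha : ∀ u, (I.allowed u).ncard ≤ a)
    (hdist : ∀ p q : V × C, (p, q) ∈ I.constraints → p.1 ≠ q.1)
    (hsymm : ∀ p q : V × C, (p, q) ∈ I.constraints → (q, p) ∈ I.constraints)
    (v : V) (R B : C) (hRB : R ≠ B) (hR : R ∈ I.allowed v) (hB : B ∈ I.allowed v)
    (hdom : ∀ w X, ((v, R), (w, X)) ∈ I.constraints → ((v, B), (w, X)) ∈ I.constraints) :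
    I.Solvable ↔
      CSP.Solvable
        { allowed := fun u => if u = v then I.allowed v \ {B} else I.allowed u
          constraints := I.constraints } := by
  constructor
  · rintro ⟨f, hf1, hf2⟩
    by_cases h : f v = B
    · refine ⟨Function.update f v R, ?_, ?_⟩
      · intro u
        by_cases hu : u = v
        · subst hu; simp [hRB, hR]
        · simp [Function.update_of_ne hu, hu, hf1 u]
      · rintro ⟨⟨p1, p2⟩, ⟨q1, q2⟩⟩ hpq ⟨h1, h2⟩
        simp only at h1 h2
        by_cases hp : p1 = v
        · subst hp
          rw [Function.update_self] at h1
          subst h1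
          have hq : q1 ≠ p1 := (hdist _ _ hpq).symm
          rw [Function.update_of_ne hq] at h2
          exact hf2 _ (hdom q1 q2 hpq) ⟨h, h2⟩
        · rw [Function.update_of_ne hp] at h1
          by_cases hq : q1 = v
          · subst hq
            rw [Function.update_self] at h2
            subst h2
            have := hsymm _ _ (hdom p1 p2 (hsymm _ _ hpq))
            exact hf2 _ this ⟨h1, h⟩
          · rw [Function.update_of_ne hq] at h2
            exact hf2 _ hpq ⟨h1, h2⟩
    · refine ⟨f, ?_, hf2⟩
      intro u
      by_cases hu : u = v
      · subst hu; simp [hf1 u, h]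
      · simp [hu, hf1 u]
  · rintro ⟨f, hf1, hf2⟩
    refine ⟨f, ?_, hf2⟩
    intro u
    have := hf1 u
    by_cases hu : u = v
    · subst hu; simp at this; exact this.1
    · simpa [hu] using this
end

section
/- In an (a,2)-CSP instance, if the pair (v,X) and the pair (w,Y) with v ≠ w are such that every constraint involving (v,X) is of the form ((v,X),(w,Z)) with Z ≠ Y, and every constraint involving (w,Y) is of the form ((v,Z),(w,Y)) with Z ≠ X, then the instance is solvable if and only if the instance restricted to the remaining variables (deleting v and w and all constraints involving them) is solvable. -/
/-- Free pair of choices in an (a,2)-CSP instance: if every constraint involving `(v,X)`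
pairs it with some `(w,Z)` with `Z ≠ Y`, and every constraint involving `(w,Y)` pairs it
with some `(v,Z)` with `Z ≠ X`, then the instance is solvable iff the instance restricted
to the remaining variables (deleting `v`, `w` and all constraints mentioning them) is
solvable. -/
theorem stmt12 {V C : Type} (a : ℕ) (I : CSP V C)
    (ha : ∀ u, (I.allowed u).ncard ≤ a)
    (v w : V) (X Y : C) (hvw : v ≠ w)
    (hX : X ∈ I.allowed v) (hY : Y ∈ I.allowed w)
    (hvX : ∀ p q : V × C, (p, q) ∈ I.constraints → p = (v, X) ∨ q = (v, X) →
      ∃ Z : C, Z ≠ Y ∧ ((p = (v, X) ∧ q = (w, Z)) ∨ (q = (v, X) ∧ p = (w, Z))))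
    (hwY : ∀ p q : V × C, (p, q) ∈ I.constraints → p = (w, Y) ∨ q = (w, Y) →
      ∃ Z : C, Z ≠ X ∧ ((p = (w, Y) ∧ q = (v, Z)) ∨ (q = (w, Y) ∧ p = (v, Z)))) :
    I.Solvable ↔
      CSP.Solvable
        { allowed := fun u : {u : V // u ≠ v ∧ u ≠ w} => I.allowed u.1
          constraints :=
            {pq : ({u : V // u ≠ v ∧ u ≠ w} × C) × ({u : V // u ≠ v ∧ u ≠ w} × C) |
              ((pq.1.1.1, pq.1.2), (pq.2.1.1, pq.2.2)) ∈ I.constraints} } := by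
  classical
  constructor
  · rintro ⟨f, hall, hcon⟩
    exact ⟨fun u => f u.1, fun u => hall u.1,
      fun pq hpq => hcon ((pq.1.1.1, pq.1.2), (pq.2.1.1, pq.2.2)) hpq⟩
  · rintro ⟨g, hall, hcon⟩
    set f : V → C := fun u =>
      if h1 : u = v then X else if h2 : u = w then Y else g ⟨u, h1, h2⟩ with hf
    have hfv : f v = X := by simp [hf]
    have hfw : f w = Y := by simp [hf, hvw.symm]
    refine ⟨f, fun u => ?_, ?_⟩
    · by_cases h1 : u = v
      · subst h1; rwa [hfv]
      · by_cases h2 : u = w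
        · subst h2; rwa [hfw]
        · simpa [hf, h1, h2] using hall ⟨u, h1, h2⟩
    · rintro ⟨⟨p1, p2⟩, ⟨q1, q2⟩⟩ hmem ⟨hp, hq⟩
      simp only at hp hq
      by_cases hp1v : p1 = v
      · subst hp1v
        obtain ⟨Z, hZ, hcase⟩ := hvX (p1, p2) (q1, q2) hmem
          (Or.inl (by rw [← hp, hfv]))
        rcases hcase with ⟨h1, h2⟩ | ⟨h1, h2⟩
        · injection h2 with e1 e2; subst e1; subst e2
          exact hZ (hfw.symm.trans hq).symm
        · exact hvw (congrArg Prod.fst h2)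
      · by_cases hp1w : p1 = w
        · subst hp1w
          obtain ⟨Z, hZ, hcase⟩ := hwY (p1, p2) (q1, q2) hmem
            (Or.inl (by rw [← hp, hfw]))
          rcases hcase with ⟨h1, h2⟩ | ⟨h1, h2⟩
          · injection h2 with e1 e2; subst e1; subst e2
            exact hZ (hfv.symm.trans hq).symm
          · exact hvw (congrArg Prod.fst h2).symm
        · by_cases hq1v : q1 = v
          · subst hq1v
            obtain ⟨Z, hZ, hcase⟩ := hvX (p1, p2) (q1, q2) hmem
              (Or.inr (by rw [← hq, hfv]))
            rcases hcase with ⟨h1, h2⟩ | ⟨h1, h2⟩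
            · exact hp1v (congrArg Prod.fst h1)
            · injection h2 with e1 e2; subst e1; subst e2
              exact hZ (hfw.symm.trans hp).symm
          · by_cases hq1w : q1 = w
            · subst hq1w
              obtain ⟨Z, hZ, hcase⟩ := hwY (p1, p2) (q1, q2) hmem
                (Or.inr (by rw [← hq, hfw]))
              rcases hcase with ⟨h1, h2⟩ | ⟨h1, h2⟩
              · exact hp1w (congrArg Prod.fst h1)
              · injection h2 with e1 e2; subst e1; subst e2
                exact hZ (hfv.symm.trans hp).symm
            · have hmem' : ((⟨⟨p1, hp1v, hp1w⟩, p2⟩, ⟨⟨q1, hq1v, hq1w⟩, q2⟩) :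
                  ({u : V // u ≠ v ∧ u ≠ w} × C) × ({u : V // u ≠ v ∧ u ≠ w} × C)) ∈
                  {pq : ({u : V // u ≠ v ∧ u ≠ w} × C) × ({u : V // u ≠ v ∧ u ≠ w} × C) |
                    ((pq.1.1.1, pq.1.2), (pq.2.1.1, pq.2.2)) ∈ I.constraints} := hmem
              exact hcon _ hmem' ⟨by simpa [hf, hp1v, hp1w] using hp,
                by simpa [hf, hq1v, hq1w] using hq⟩
end

section
/- Every (a,b)-CSP instance with m constraints can be transformed into an equivalent (b,a)-CSP instance with m variables: the transformed instance is solvable if and only if the original one is. -/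
/-- A general constraint satisfaction instance: each variable has a set of allowed colors;
each constraint is a set of (variable,color) pairs which are forbidden from all occurring
simultaneously. -/
structure GenCSP (V C : Type) where
  allowed : V → Set C
  constraints : Set (Set (V × C))

/-- `f` is a solution: it picks an allowed color for every variable and, for every
constraint, avoids at least one of its (variable,color) pairs. -/
def GenCSP.Satisfies {V C : Type} (I : GenCSP V C) (f : V → C) : Prop :=
  (∀ v, f v ∈ I.allowed v) ∧ ∀ s ∈ I.constraints, ∃ p ∈ s, f p.1 ≠ p.2

/-- An instance is solvable if it has a solution. -/
def GenCSP.Solvable {V C : Type} (I : GenCSP V C) : Prop := ∃ f, I.Satisfies f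

/-- Duality: every (a,b)-CSP instance is equivalent to a (b,a)-CSP instance whose variables
are the constraints of the original instance: it is solvable iff the original is. -/
theorem stmt14 {V C : Type} (a b : ℕ) (I : GenCSP V C)
    (hafin : ∀ v, (I.allowed v).Finite) (ha : ∀ v, (I.allowed v).ncard ≤ a)
    (hbfin : ∀ s ∈ I.constraints, s.Finite) (hb : ∀ s ∈ I.constraints, s.ncard ≤ b) :
    ∃ J : GenCSP {s : Set (V × C) // s ∈ I.constraints} (V × C),
      (∀ t, (J.allowed t).Finite ∧ (J.allowed t).ncard ≤ b) ∧
      (∀ s ∈ J.constraints, s.Finite ∧ s.ncard ≤ a) ∧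
      (J.Solvable ↔ I.Solvable) := by
  classical
  refine ⟨{ allowed := fun t => t.val,
            constraints := { T | ∃ (v : V)
              (σ : {c // c ∈ I.allowed v} → {s : Set (V × C) // s ∈ I.constraints}),
              (∀ c, (v, c.val) ∈ (σ c).val) ∧
              T = Set.range (fun c => (σ c, (v, c.val))) } }, ?_, ?_, ?_⟩
  · intro t; exact ⟨hbfin t.1 t.2, hb t.1 t.2⟩
  · rintro T ⟨v, σ, hσ, rfl⟩
    have hfin : Finite {c // c ∈ I.allowed v} := (hafin v).to_subtype
    refine ⟨Set.finite_range _, ?_⟩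
    rw [← Set.image_univ]
    calc ((fun c => (σ c, (v, c.val))) '' Set.univ).ncard
        ≤ (Set.univ : Set {c // c ∈ I.allowed v}).ncard :=
          Set.ncard_image_le Set.finite_univ
      _ = Nat.card {c // c ∈ I.allowed v} := Set.ncard_univ _
      _ = (I.allowed v).ncard := Nat.card_coe_set_eq _
      _ ≤ a := ha v
  · constructor
    · rintro ⟨g, hg1, hg2⟩
      have key : ∀ v : V, ∃ c ∈ I.allowed v, ∀ t, g t ≠ (v, c) := by
        intro v
        by_contra hcon
        push_neg at hcon
        have hσ : ∀ c : {c // c ∈ I.allowed v}, ∃ t, g t = (v, c.val) := by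
          intro c; exact hcon c.val c.2
        choose σ hσ' using hσ
        have hmem : ∀ c, (v, c.val) ∈ (σ c).val := by
          intro c; rw [← hσ' c]; exact hg1 (σ c)
        obtain ⟨p, hp, hpne⟩ := hg2 _ ⟨v, σ, hmem, rfl⟩
        obtain ⟨c, rfl⟩ := hp
        exact hpne (hσ' c)
      choose f hf1 hf2 using key
      refine ⟨f, hf1, ?_⟩
      intro s hs
      refine ⟨g ⟨s, hs⟩, hg1 ⟨s, hs⟩, ?_⟩
      intro heq
      exact hf2 (g ⟨s, hs⟩).1 ⟨s, hs⟩ (Prod.ext rfl heq.symm)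
    · rintro ⟨f, hf1, hf2⟩
      have hg : ∀ t : {s : Set (V × C) // s ∈ I.constraints},
          ∃ p ∈ t.val, f p.1 ≠ p.2 := fun t => hf2 t.val t.2
      choose g hg1 hg2 using hg
      refine ⟨g, hg1, ?_⟩
      rintro T ⟨v, σ, hσ, rfl⟩
      refine ⟨(σ ⟨f v, hf1 v⟩, (v, f v)), ⟨⟨f v, hf1 v⟩, rfl⟩, ?_⟩
      intro heq
      have := hg2 (σ ⟨f v, hf1 v⟩)
      rw [heq] at this
      exact this rfl
end

section
/- A (4,2)-CSP instance with an isolated constraint ((v,R),(w,R)) between two three-color variables v, w is solvable if and only if the instance obtained by merging v and w into one four-color variable (whose colors are the two non-R colors of v and the two non-R colors of w, with the merged variable inheriting all constraints of the corresponding original pairs) is solvable. -/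
/-- The renaming of (variable,color) pairs used when merging `w` into `v`: pairs of `w`
become `Sum.inr` colors of `v`, all other pairs keep their variable with an `inl` color. -/
def mergePair {V C : Type} [DecidableEq V] (v w : V) (hvw : v ≠ w) (p : V × C) :
    {u : V // u ≠ w} × (C ⊕ C) :=
  if h : p.1 = w then (⟨v, hvw⟩, Sum.inr p.2) else (⟨p.1, h⟩, Sum.inl p.2)

/-- A (4,2)-CSP instance with an isolated constraint `((v,R),(w,R))` between two three-color
variables is solvable iff the instance obtained by merging `v` and `w` into a single
four-color variable — whose colors are the two non-`R` colors of `v` and the two non-`R`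
colors of `w`, inheriting all constraints of the corresponding original pairs — is
solvable. -/
theorem stmt15 {V C : Type} [DecidableEq V] (I : CSP V C)
    (h4 : ∀ u, (I.allowed u).ncard ≤ 4)
    (hdist : ∀ p q : V × C, (p, q) ∈ I.constraints → p.1 ≠ q.1)
    (v w : V) (R : C) (hvw : v ≠ w)
    (hv3 : (I.allowed v).ncard = 3) (hw3 : (I.allowed w).ncard = 3)
    (hRv : R ∈ I.allowed v) (hRw : R ∈ I.allowed w)
    (hcon : ((v, R), (w, R)) ∈ I.constraints)
    (hiso : ∀ p q : V × C, (p, q) ∈ I.constraints →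
      p = (v, R) ∨ q = (v, R) ∨ p = (w, R) ∨ q = (w, R) →
      (p, q) = ((v, R), (w, R)) ∨ (p, q) = ((w, R), (v, R))) :
    I.Solvable ↔
      CSP.Solvable
        { allowed := fun u : {u : V // u ≠ w} =>
            if u.1 = v then
              Sum.inl '' (I.allowed v \ {R}) ∪ Sum.inr '' (I.allowed w \ {R})
            else Sum.inl '' I.allowed u.1
          constraints :=
            {pq : ({u : V // u ≠ w} × (C ⊕ C)) × ({u : V // u ≠ w} × (C ⊕ C)) |
              ∃ p q : V × C, (p, q) ∈ I.constraints ∧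
                p ≠ (v, R) ∧ q ≠ (v, R) ∧ p ≠ (w, R) ∧ q ≠ (w, R) ∧
                pq.1 = mergePair v w hvw p ∧ pq.2 = mergePair v w hvw q} } := by
  classical
  constructor
  · rintro ⟨f, hall, hsat⟩
    have hfw : f v = R → f w ≠ R := fun h1 h2 => hsat _ hcon ⟨h1, h2⟩
    let X : C ⊕ C := if f v = R then Sum.inr (f w) else Sum.inl (f v)
    have hX : X = if f v = R then Sum.inr (f w) else Sum.inl (f v) := rfl
    let g : {u : V // u ≠ w} → C ⊕ C := fun u => if u.1 = v then X else Sum.inl (f u.1)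
    have gA : ∀ u : {u : V // u ≠ w}, u.1 = v → g u = X := fun u hu => if_pos hu
    have gB : ∀ u : {u : V // u ≠ w}, ¬u.1 = v → g u = Sum.inl (f u.1) := fun u hu => if_neg hu
    refine ⟨g, ?_, ?_⟩
    · intro u
      show g u ∈ (if u.1 = v then
          Sum.inl '' (I.allowed v \ {R}) ∪ Sum.inr '' (I.allowed w \ {R})
        else Sum.inl '' I.allowed u.1)
      by_cases hu : u.1 = v
      · rw [gA u hu, if_pos hu, hX]
        by_cases hfv : f v = R
        · rw [if_pos hfv]
          exact Or.inr ⟨f w, ⟨hall w, hfw hfv⟩, rfl⟩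
        · rw [if_neg hfv]
          exact Or.inl ⟨f v, ⟨hall v, hfv⟩, rfl⟩
      · rw [gB u hu, if_neg hu]
        exact ⟨f u.1, hall u.1, rfl⟩
    · rintro ⟨P, Q⟩ ⟨p, q, hpq, hpv, hqv, hpw, hqw, hP, hQ⟩ hcontr
      subst hP; subst hQ
      obtain ⟨h1, h2⟩ := hcontr
      have key : ∀ p : V × C, p ≠ (v, R) → p ≠ (w, R) →
          g (mergePair v w hvw p).1 = (mergePair v w hvw p).2 → f p.1 = p.2 := by
        intro p hpv hpw h
        by_cases hw1 : p.1 = w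
        · have e1 : (mergePair v w hvw p).1 = ⟨v, hvw⟩ := by simp [mergePair, hw1]
          have e2 : (mergePair v w hvw p).2 = Sum.inr p.2 := by simp [mergePair, hw1]
          rw [e1, e2, gA _ rfl, hX] at h
          by_cases hfv : f v = R
          · rw [if_pos hfv] at h
            rw [hw1]; exact Sum.inr_injective h
          · rw [if_neg hfv] at h
            exact absurd h (by simp)
        · have e1 : (mergePair v w hvw p).1 = ⟨p.1, hw1⟩ := by simp [mergePair, hw1]
          have e2 : (mergePair v w hvw p).2 = Sum.inl p.2 := by simp [mergePair, hw1]
          rw [e1, e2] at h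
          by_cases hv1 : p.1 = v
          · rw [gA _ hv1, hX] at h
            by_cases hfv : f v = R
            · rw [if_pos hfv] at h
              exact absurd h (by simp)
            · rw [if_neg hfv] at h
              rw [hv1]; exact Sum.inl_injective h
          · rw [gB _ hv1] at h
            exact Sum.inl_injective h
      exact hsat (p, q) hpq ⟨key p hpv hpw h1, key q hqv hqw h2⟩
  · rintro ⟨g, gall, gsat⟩
    have hv' : g ⟨v, hvw⟩ ∈ Sum.inl '' (I.allowed v \ {R}) ∪ Sum.inr '' (I.allowed w \ {R}) := by
      have := gall ⟨v, hvw⟩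
      simpa using this
    have hother : ∀ (u : V) (hu : u ≠ w), u ≠ v → ∃ d ∈ I.allowed u, g ⟨u, hu⟩ = Sum.inl d := by
      intro u hu huv
      have := gall ⟨u, hu⟩
      simp only [if_neg huv] at this
      obtain ⟨d, hd, hgd⟩ := this
      exact ⟨d, hd, hgd.symm⟩
    let Yv : C := Sum.elim id (fun _ => R) (g ⟨v, hvw⟩)
    let Yw : C := Sum.elim (fun _ => R) id (g ⟨v, hvw⟩)
    let f : V → C := fun u =>
      if hu : u = w then Yw else if u = v then Yv else Sum.elim id id (g ⟨u, hu⟩)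
    have fw : f w = Yw := dif_pos rfl
    have fv : f v = Yv := by
      show (if hu : v = w then Yw else if v = v then Yv
        else Sum.elim id id (g ⟨v, hu⟩)) = Yv
      simp [hvw]
    have fother : ∀ (u : V) (hu : u ≠ w), u ≠ v → f u = Sum.elim id id (g ⟨u, hu⟩) := by
      intro u hu huv
      show (if h : u = w then Yw else if u = v then Yv
        else Sum.elim id id (g ⟨u, h⟩)) = Sum.elim id id (g ⟨u, hu⟩)
      simp [hu, huv]
    have hnot : ¬(f v = R ∧ f w = R) := by
      rintro ⟨hA, hB⟩
      rw [fv] at hA; rw [fw] at hB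
      rcases hv' with ⟨c, hc, hgc⟩ | ⟨c, hc, hgc⟩
      · have : Yv = c := by
          show Sum.elim id (fun _ => R) (g ⟨v, hvw⟩) = c
          rw [← hgc]; rfl
        exact hc.2 (this ▸ hA)
      · have : Yw = c := by
          show Sum.elim (fun _ => R) id (g ⟨v, hvw⟩) = c
          rw [← hgc]; rfl
        exact hc.2 (this ▸ hB)
    refine ⟨f, ?_, ?_⟩
    · intro u
      by_cases hu : u = w
      · rw [hu, fw]
        rcases hv' with ⟨c, hc, hgc⟩ | ⟨c, hc, hgc⟩
        · have : Yw = R := by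
            show Sum.elim (fun _ => R) id (g ⟨v, hvw⟩) = R
            rw [← hgc]; rfl
          rw [this]; exact hRw
        · have : Yw = c := by
            show Sum.elim (fun _ => R) id (g ⟨v, hvw⟩) = c
            rw [← hgc]; rfl
          rw [this]; exact hc.1
      · by_cases huv : u = v
        · rw [huv, fv]
          rcases hv' with ⟨c, hc, hgc⟩ | ⟨c, hc, hgc⟩
          · have : Yv = c := by
              show Sum.elim id (fun _ => R) (g ⟨v, hvw⟩) = c
              rw [← hgc]; rfl
            rw [this]; exact hc.1
          · have : Yv = R := by
              show Sum.elim id (fun _ => R) (g ⟨v, hvw⟩) = R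
              rw [← hgc]; rfl
            rw [this]; exact hRv
        · obtain ⟨d, hd, hgd⟩ := hother u hu huv
          rw [fother u hu huv, hgd]
          exact hd
    · rintro ⟨p, q⟩ hpq hcontr
      obtain ⟨h1, h2⟩ := hcontr
      simp only at h1 h2
      by_cases hspec : p = (v, R) ∨ q = (v, R) ∨ p = (w, R) ∨ q = (w, R)
      · rcases hiso p q hpq hspec with h | h
        · simp only [Prod.mk.injEq] at h
          obtain ⟨rfl, rfl⟩ := h
          exact hnot ⟨h1, h2⟩
        · simp only [Prod.mk.injEq] at h
          obtain ⟨rfl, rfl⟩ := h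
          exact hnot ⟨h2, h1⟩
      · push_neg at hspec
        obtain ⟨hpv, hqv, hpw, hqw⟩ := hspec
        have key2 : ∀ p : V × C, p ≠ (v, R) → p ≠ (w, R) → f p.1 = p.2 →
            g (mergePair v w hvw p).1 = (mergePair v w hvw p).2 := by
          intro p hpv hpw h
          by_cases hw1 : p.1 = w
          · have e1 : (mergePair v w hvw p).1 = ⟨v, hvw⟩ := by simp [mergePair, hw1]
            have e2 : (mergePair v w hvw p).2 = Sum.inr p.2 := by simp [mergePair, hw1]
            rw [e1, e2]
            rw [hw1, fw] at h
            rcases hv' with ⟨c, hc, hgc⟩ | ⟨c, hc, hgc⟩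
            · have : Yw = R := by
                show Sum.elim (fun _ => R) id (g ⟨v, hvw⟩) = R
                rw [← hgc]; rfl
              rw [this] at h
              exact absurd (Prod.ext hw1 h.symm) hpw
            · have : Yw = c := by
                show Sum.elim (fun _ => R) id (g ⟨v, hvw⟩) = c
                rw [← hgc]; rfl
              rw [this] at h
              rw [← hgc, h]
          · have e1 : (mergePair v w hvw p).1 = ⟨p.1, hw1⟩ := by simp [mergePair, hw1]
            have e2 : (mergePair v w hvw p).2 = Sum.inl p.2 := by simp [mergePair, hw1]
            rw [e1, e2]
            by_cases hv1 : p.1 = v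
            · rw [hv1, fv] at h
              have eq1 : (⟨p.1, hw1⟩ : {u : V // u ≠ w}) = ⟨v, hvw⟩ := by
                simp [hv1]
              rw [eq1]
              rcases hv' with ⟨c, hc, hgc⟩ | ⟨c, hc, hgc⟩
              · have : Yv = c := by
                  show Sum.elim id (fun _ => R) (g ⟨v, hvw⟩) = c
                  rw [← hgc]; rfl
                rw [this] at h
                rw [← hgc, h]
              · have : Yv = R := by
                  show Sum.elim id (fun _ => R) (g ⟨v, hvw⟩) = R
                  rw [← hgc]; rfl
                rw [this] at h
                exact absurd (Prod.ext hv1 h.symm) hpv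
            · obtain ⟨d, hd, hgd⟩ := hother p.1 hw1 hv1
              rw [fother p.1 hw1 hv1, hgd] at h
              simp only [Sum.elim_inl, id] at h
              rw [hgd, h]
        exact gsat (mergePair v w hvw p, mergePair v w hvw q)
          ⟨p, q, hpq, hpv, hqv, hpw, hqw, rfl, rfl⟩
          ⟨key2 p hpv hpw h1, key2 q hqv hqw h2⟩
end

section
/- Let C be a set of (variable,color) pairs in a (4,2)-CSP instance involving exactly four distinct variables, each pair having exactly three constraints all going to pairs within C, and C connected under the constraint relation. Then |C| is a multiple of four and each of the four variables contributes exactly |C|/4 pairs to C. -/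
/-!
Every pair `p` has exactly three neighbours on pairwise distinct variables, all different from
its own, and there are only three other variables: so `p` has exactly one neighbour at each of
them. For two variables `u ≠ w`, sending a pair at `u` to its neighbour at `w` is therefore
injective (two pairs at `u` with a common neighbour `q` would be two neighbours of `q` at the same
variable), and by symmetry the fibres over `u` and `w` have the same size.
-/

open Set

section FiberBalance

variable {α β : Type*} {f : α → β} {S : Set α}

theorem Set.ncard_eq_mul_ncard_image (hS : S.Finite) {n : ℕ}
    (h : ∀ b ∈ f '' S, {a ∈ S | f a = b}.ncard = n) : S.ncard = n * (f '' S).ncard := by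
  classical
  obtain ⟨s, rfl⟩ := hS.exists_finset_coe
  have hfiber : ∀ b ∈ s.image f, {a ∈ s | f a = b}.card = n := fun b hb => by
    rw [← h b (by simpa using hb), ← ncard_coe_finset, Finset.coe_filter]
    rfl
  rw [← Finset.coe_image, ncard_coe_finset, ncard_coe_finset]
  exact le_antisymm (Finset.card_le_mul_card_image s n fun b hb => (hfiber b hb).le)
    (Finset.mul_card_image_le_card s n fun b hb => (hfiber b hb).ge)

variable {R : α → α → Prop}

theorem image_adj_eq_image_diff (hS : S.Finite) {p : α} (hp : p ∈ S)
    (hadj : ∀ q, R p q → q ∈ S ∧ f q ≠ f p) (hinj : InjOn f {q | R p q})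
    (hcard : {q | R p q}.ncard + 1 = (f '' S).ncard) :
    f '' {q | R p q} = f '' S \ {f p} := by
  have hsub : f '' {q | R p q} ⊆ f '' S \ {f p} := by
    rintro _ ⟨q, hq, rfl⟩
    exact ⟨mem_image_of_mem f (hadj q hq).1, (hadj q hq).2⟩
  refine eq_of_subset_of_ncard_le hsub ?_ (hS.image f).sdiff
  rw [hinj.ncard_image, ncard_sdiff_singleton_of_mem (mem_image_of_mem f hp)]
  omega

theorem ncard_fiber_le_of_forall_exists_adj (hS : S.Finite) (hsymm : ∀ p q, R p q → R q p)
    (hclosed : ∀ p ∈ S, ∀ q, R p q → q ∈ S)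
    (huniq : ∀ p ∈ S, ∀ q₁ q₂, R p q₁ → R p q₂ → f q₁ = f q₂ → q₁ = q₂)
    (hfull : ∀ p ∈ S, ∀ w ∈ f '' S, w ≠ f p → ∃ q, R p q ∧ f q = w)
    (u : β) {w : β} (hw : w ∈ f '' S) :
    {p ∈ S | f p = u}.ncard ≤ {p ∈ S | f p = w}.ncard := by
  obtain rfl | huw := eq_or_ne u w
  · exact le_rfl
  have hnb : ∀ p ∈ {p ∈ S | f p = u}, ∃ q, R p q ∧ f q = w := fun p hp =>
    hfull p hp.1 w hw (hp.2 ▸ huw.symm)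
  choose! g hgR hgf using hnb
  refine ncard_le_ncard_of_injOn g (fun p hp => ⟨hclosed p hp.1 _ (hgR p hp), hgf p hp⟩) ?_
    (hS.sep _)
  intro p₁ hp₁ p₂ hp₂ hg
  have hq : g p₁ ∈ S := hclosed p₁ hp₁.1 _ (hgR p₁ hp₁)
  exact huniq _ hq p₁ p₂ (hsymm _ _ (hgR p₁ hp₁)) (hg ▸ hsymm _ _ (hgR p₂ hp₂))
    (hp₁.2.trans hp₂.2.symm)

end FiberBalance

theorem stmt16_general {V C : Type} (I : CSP V C)
    (S : Set (V × C)) (hfin : S.Finite)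
    (hvars : (Prod.fst '' S).ncard = 4)
    (hinS : ∀ p ∈ S, ∀ q : V × C, ((p, q) ∈ I.constraints ∨ (q, p) ∈ I.constraints) →
      q ∈ S ∧ q.1 ≠ p.1)
    (hthree : ∀ p ∈ S,
      {q : V × C | (p, q) ∈ I.constraints ∨ (q, p) ∈ I.constraints}.ncard = 3)
    (huniq : ∀ p ∈ S, ∀ q₁ q₂ : V × C,
      ((p, q₁) ∈ I.constraints ∨ (q₁, p) ∈ I.constraints) →
      ((p, q₂) ∈ I.constraints ∨ (q₂, p) ∈ I.constraints) → q₁.1 = q₂.1 → q₁ = q₂) :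
    ∃ j : ℕ, S.ncard = 4 * j ∧ ∀ u ∈ Prod.fst '' S, {p ∈ S | p.1 = u}.ncard = j := by
  let R : V × C → V × C → Prop :=
    fun x y => (x, y) ∈ I.constraints ∨ (y, x) ∈ I.constraints
  have hfull : ∀ p ∈ S, ∀ w ∈ Prod.fst '' S, w ≠ p.1 → ∃ q, R p q ∧ q.1 = w := by
    intro p hp w hw hne
    have himg := image_adj_eq_image_diff (R := R) hfin hp (hinS p hp)
      (fun q₁ h₁ q₂ h₂ => huniq p hp q₁ q₂ h₁ h₂)
      (by rw [hvars]; exact congrArg (· + 1) (hthree p hp))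
    obtain ⟨q, hq, rfl⟩ : w ∈ Prod.fst '' {q | R p q} := himg ▸ ⟨hw, hne⟩
    exact ⟨q, hq, rfl⟩
  have hfiber_le := ncard_fiber_le_of_forall_exists_adj hfin (fun _ _ => Or.symm)
    (fun p hp q hq => (hinS p hp q hq).1) huniq hfull
  obtain ⟨u₀, hu₀⟩ : (Prod.fst '' S).Nonempty := nonempty_of_ncard_ne_zero (by omega)
  have hbalanced : ∀ u ∈ Prod.fst '' S,
      {p ∈ S | p.1 = u}.ncard = {p ∈ S | p.1 = u₀}.ncard := fun u hu =>
    le_antisymm (hfiber_le u hu₀) (hfiber_le u₀ hu)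
  refine ⟨_, ?_, hbalanced⟩
  rw [ncard_eq_mul_ncard_image hfin hbalanced, hvars, mul_comm]

/-- A small three-component of a (4,2)-CSP instance: a constraint-connected set `S` of
(variable,color) pairs on exactly four distinct variables, each pair having exactly three
constraints, all going to pairs within `S` on distinct variables different from its own.
Then `|S|` is a multiple of 4 and each of the four variables contributes exactly `|S|/4`
pairs. -/
theorem stmt16 {V C : Type} (I : CSP V C)
    (h4 : ∀ u, (I.allowed u).ncard ≤ 4)
    (S : Set (V × C)) (hfin : S.Finite)
    (hvars : (Prod.fst '' S).ncard = 4)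
    (hinS : ∀ p ∈ S, ∀ q : V × C, ((p, q) ∈ I.constraints ∨ (q, p) ∈ I.constraints) →
      q ∈ S ∧ q.1 ≠ p.1)
    (hthree : ∀ p ∈ S,
      {q : V × C | (p, q) ∈ I.constraints ∨ (q, p) ∈ I.constraints}.ncard = 3)
    (huniq : ∀ p ∈ S, ∀ q₁ q₂ : V × C,
      ((p, q₁) ∈ I.constraints ∨ (q₁, p) ∈ I.constraints) →
      ((p, q₂) ∈ I.constraints ∨ (q₂, p) ∈ I.constraints) → q₁.1 = q₂.1 → q₁ = q₂)
    (hconn : ∀ p ∈ S, ∀ q ∈ S,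
      Relation.ReflTransGen
        (fun x y : V × C => (x, y) ∈ I.constraints ∨ (y, x) ∈ I.constraints) p q) :
    ∃ j : ℕ, S.ncard = 4 * j ∧ ∀ u ∈ Prod.fst '' S, {p ∈ S | p.1 = u}.ncard = j :=
  stmt16_general I S hfin hvars hinS hthree huniq
end

section
/- Consider a (4,2)-CSP instance in which every constraint belongs either to a 'good three-component' (four pairs on four distinct variables, pairwise constrained) or a 'small two-component' (three pairs, pairwise constrained). Then the instance is solvable if and only if the bipartite graph with variables on one side and components on the other, with an edge when a component contains a pair of that variable, has a matching covering all variables. -/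
/-- Suppose every allowed (variable,color) pair and every constraint of a (4,2)-CSP instance
lies in one of a family of pairwise disjoint components, each of which is either a good
three-component (four pairwise-constrained pairs on four distinct variables) or a small
two-component (three pairwise-constrained pairs).  Then the instance is solvable iff the
bipartite graph between variables and components (a variable is joined to the components
containing a pair of that variable with an allowed color) has a matching covering all the
variables. -/
theorem stmt17 {V C K : Type} (I : CSP V C)
    (h4 : ∀ u, (I.allowed u).ncard ≤ 4)
    (hdist : ∀ p q : V × C, (p, q) ∈ I.constraints → p.1 ≠ q.1)
    (comp : K → Set (V × C))
    (hdisj : ∀ k k' : K, k ≠ k' → Disjoint (comp k) (comp k'))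
    (hclique : ∀ k : K, ∀ p ∈ comp k, ∀ q ∈ comp k, p ≠ q →
      (p, q) ∈ I.constraints ∨ (q, p) ∈ I.constraints)
    (htype : ∀ k : K,
      ((comp k).ncard = 4 ∧ (Prod.fst '' comp k).ncard = 4) ∨ (comp k).ncard = 3)
    (hcover : ∀ v : V, ∀ c ∈ I.allowed v, ∃ k, (v, c) ∈ comp k)
    (hconstr : ∀ p q : V × C, (p, q) ∈ I.constraints → ∃ k, p ∈ comp k ∧ q ∈ comp k) :
    I.Solvable ↔
      ∃ M : V → K, Function.Injective M ∧
        ∀ v, ∃ c ∈ I.allowed v, (v, c) ∈ comp (M v) := by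
  constructor
  · rintro ⟨f, hf, hc⟩
    choose M hM using fun v => hcover v (f v) (hf v)
    refine ⟨M, ?_, fun v => ⟨f v, hf v, hM v⟩⟩
    intro u v huv
    by_contra hne
    have h1 := hM u
    have h2 := hM v
    rw [huv] at h1
    have hne' : ((u, f u) : V × C) ≠ (v, f v) := by
      intro h; exact hne (congrArg Prod.fst h)
    rcases hclique (M v) _ h1 _ h2 hne' with h | h
    · exact hc _ h ⟨rfl, rfl⟩
    · exact hc _ h ⟨rfl, rfl⟩
  · rintro ⟨M, hMinj, hM⟩
    choose f hf hfc using hM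
    refine ⟨f, hf, ?_⟩
    rintro ⟨⟨u, a⟩, v, b⟩ hpq ⟨h1, h2⟩
    obtain ⟨k, hk1, hk2⟩ := hconstr _ _ hpq
    simp only at h1 h2
    rw [← h1] at hk1
    rw [← h2] at hk2
    have e1 : M u = k := by
      by_contra h
      exact Set.disjoint_left.mp (hdisj _ _ h) (hfc u) hk1
    have e2 : M v = k := by
      by_contra h
      exact Set.disjoint_left.mp (hdisj _ _ h) (hfc v) hk2
    exact hdist _ _ hpq (hMinj (e1.trans e2.symm))
end

section
/- Let G be a graph in which every vertex has degree at least 3 and no cycle consists entirely of degree-3 vertices, and every connected subgraph of degree-3 vertices has at most 7 vertices. Let F be a maximal bushy forest in G with r leaves. Then |V(G) \ V(F)| ≤ 20r/3. -/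
open Finset

namespace Stmt18Aux

variable {V : Type} [Fintype V] [DecidableEq V]

lemma sum_card_swap (R : V → V → Prop) [∀ a b, Decidable (R a b)] (s : Finset V) :
    ∑ v ∈ s, #(univ.filter (fun w => R v w)) = ∑ w : V, #(s.filter (fun v => R v w)) := by
  simp only [Finset.card_filter]
  exact Finset.sum_comm

lemma walk_support_subset {H : SimpleGraph V} {A : Set V}
    (hA : ∀ u ∈ A, ∀ w, H.Adj u w → w ∈ A) {a b : V} (p : H.Walk a b) (ha : a ∈ A) :
    ∀ u ∈ p.support, u ∈ A := by
  induction p with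
  | nil => simpa
  | cons h q ih =>
    intro u hu
    rw [SimpleGraph.Walk.support_cons, List.mem_cons] at hu
    rcases hu with rfl | hu
    · exact ha
    · exact ih (hA _ ha _ h) u hu

lemma induce_connected_of_closed {H : SimpleGraph V} {S : Set V} {v : V} (hv : v ∈ S)
    (hreach : ∀ u ∈ S, H.Reachable v u)
    (hclosed : ∀ u ∈ S, ∀ w, H.Adj u w → w ∈ S) :
    (H.induce S).Connected := by
  apply H.induce_connected_of_patches v hv
  intro u hu
  obtain ⟨p⟩ := hreach u hu
  refine ⟨{x | x ∈ p.support}, ?_, p.start_mem_support, p.end_mem_support, ?_⟩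
  · intro x hx
    exact walk_support_subset hclosed p hv x hx
  · exact (p.connected_induce_support).preconnected _ _

lemma component_partition (H : SimpleGraph V) (f : V → ℕ) (A₀ : Finset V)
    (hcomp : ∀ S : Finset V, S ⊆ A₀ → (∀ u ∈ S, ∀ w, H.Adj u w → w ∈ S) →
      (∃ v ∈ S, ∀ u ∈ S, H.Reachable v u) → 9 * S.card ≤ 7 * ∑ u ∈ S, f u) :
    ∀ A : Finset V, A ⊆ A₀ → (∀ u ∈ A, ∀ w, H.Adj u w → w ∈ A) →
      9 * A.card ≤ 7 * ∑ u ∈ A, f u := by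
  classical
  intro A
  induction A using Finset.strongInduction with
  | _ A ih =>
    intro hA hclosed
    rcases A.eq_empty_or_nonempty with rfl | ⟨v, hv⟩
    · simp
    · set S := A.filter (fun u => H.Reachable v u) with hS
      have hvS : v ∈ S := by
        rw [hS, mem_filter]
        exact ⟨hv, SimpleGraph.Reachable.refl v⟩
      have hSsub : S ⊆ A := filter_subset _ _
      have hSclosed : ∀ u ∈ S, ∀ w, H.Adj u w → w ∈ S := by
        intro u hu w hw
        rw [hS, mem_filter] at hu ⊢
        exact ⟨hclosed u hu.1 w hw, hu.2.trans hw.reachable⟩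
      have h1 := hcomp S (hSsub.trans hA) hSclosed
        ⟨v, hvS, fun u hu => (mem_filter.mp hu).2⟩
      have hA'closed : ∀ u ∈ A \ S, ∀ w, H.Adj u w → w ∈ A \ S := by
        intro u hu w hw
        rw [mem_sdiff] at hu ⊢
        refine ⟨hclosed u hu.1 w hw, fun hwS => hu.2 ?_⟩
        exact hSclosed w hwS u hw.symm
      have h2 := ih (A \ S) (sdiff_ssubset hSsub ⟨v, hvS⟩)
        ((sdiff_subset).trans hA) hA'closed
      have hcard : #(A \ S) + #S = #A := card_sdiff_add_card_eq_card hSsub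
      have hsum : ∑ u ∈ A \ S, f u + ∑ u ∈ S, f u = ∑ u ∈ A, f u :=
        Finset.sum_sdiff hSsub
      omega

end Stmt18Aux

open Stmt18Aux in
/-- Let `G` have minimum degree 3, no cycle consisting entirely of degree-3 vertices, and no
connected set of degree-3 vertices with more than 7 vertices.  Let `F` be a maximal bushy
forest (every vertex of `F` is a leaf or has degree ≥ 4 in `F`; no internal vertex of `F`
has a `G`-neighbor outside `F`; no leaf of `F` has 3 or more neighbors outside `F`; no
vertex outside `F` has 4 or more neighbors outside `F`) with `r` leaves.  Then
`|V(G) \ V(F)| ≤ 20r/3`. -/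
theorem stmt18 {V : Type} [Fintype V] [DecidableEq V] (G : SimpleGraph V) [DecidableRel G.Adj]
    (hdeg3 : ∀ v : V, 3 ≤ G.degree v)
    (hnocycle : ∀ (v : V) (c : G.Walk v v), c.IsCycle → ∃ u ∈ c.support, G.degree u ≠ 3)
    (htree : ∀ S : Set V, (∀ v ∈ S, G.degree v = 3) → (G.induce S).Connected → S.ncard ≤ 7)
    (F : G.Subgraph)
    (hforest : F.coe.IsAcyclic)
    (hbushy : ∀ v ∈ F.verts, (F.neighborSet v).ncard = 1 ∨ 4 ≤ (F.neighborSet v).ncard)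
    (hmax1 : ∀ v ∈ F.verts, 2 ≤ (F.neighborSet v).ncard → ∀ u : V, G.Adj v u → u ∈ F.verts)
    (hmax2 : ∀ v ∈ F.verts, (F.neighborSet v).ncard = 1 →
      {u : V | G.Adj v u ∧ u ∉ F.verts}.ncard ≤ 2)
    (hmax3 : ∀ v ∉ F.verts, {u : V | G.Adj v u ∧ u ∉ F.verts}.ncard ≤ 3) :
    3 * (F.vertsᶜ).ncard ≤ 20 * {v ∈ F.verts | (F.neighborSet v).ncard = 1}.ncard := by
  classical
  -- abbreviations
  set D3p : V → Prop := fun v => v ∉ F.verts ∧ G.degree v = 3 with hD3p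
  set D4p : V → Prop := fun v => v ∉ F.verts ∧ 4 ≤ G.degree v with hD4p
  -- the graph of degree-3 vertices outside F
  set H : SimpleGraph V :=
    { Adj := fun u w => G.Adj u w ∧ D3p u ∧ D3p w
      symm := ⟨fun u w h => ⟨h.1.symm, h.2.2, h.2.1⟩⟩
      loopless := ⟨fun u h => G.loopless.irrefl u h.1⟩ } with hH
  have hHadj : ∀ u w, H.Adj u w ↔ (G.Adj u w ∧ D3p u ∧ D3p w) := fun u w => Iff.rfl
  have hHG : H ≤ G := fun u w h => h.1
  -- finsets
  set X : Finset V := univ.filter (fun v => v ∉ F.verts) with hX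
  set D3 : Finset V := univ.filter D3p with hD3
  set D4 : Finset V := univ.filter D4p with hD4
  set L : Finset V := univ.filter (fun v => v ∈ F.verts ∧ (F.neighborSet v).ncard = 1) with hL
  set f : V → ℕ := fun v => #(univ.filter (fun w => G.Adj v w ∧ w ∈ F.verts)) with hf
  set g : V → ℕ := fun v => #(univ.filter (fun w => G.Adj v w ∧ D4p w)) with hg
  set fX : V → ℕ := fun v => #(univ.filter (fun w => G.Adj v w ∧ w ∉ F.verts)) with hfX
  set h3 : V → ℕ := fun v => #(univ.filter (fun w => G.Adj v w ∧ D3p w)) with hh3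
  -- ncard ↔ filter card
  have hncard : ∀ (p : V → Prop), {u | p u}.ncard = #(univ.filter (fun u => p u)) := by
    intro p
    rw [Set.ncard_eq_toFinset_card']
    congr 1
    ext u
    simp
  have hcardeq : ∀ (p : V → Prop) (h1 h2 : DecidablePred p),
      #(@Finset.filter V p h1 univ) = #(@Finset.filter V p h2 univ) := by
    intro p h1 h2
    congr!
  -- degree partition: f + fX = degree
  have hsplit1 : ∀ v : V, f v + fX v = G.degree v := by
    intro v
    have h := Finset.card_filter_add_card_filter_not
      (s := G.neighborFinset v) (p := fun w => w ∈ F.verts)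
    have e1 : (G.neighborFinset v).filter (fun w => w ∈ F.verts)
        = univ.filter (fun w => G.Adj v w ∧ w ∈ F.verts) := by
      ext w; simp [SimpleGraph.mem_neighborFinset]
    have e2 : (G.neighborFinset v).filter (fun w => ¬ w ∈ F.verts)
        = univ.filter (fun w => G.Adj v w ∧ w ∉ F.verts) := by
      ext w; simp [SimpleGraph.mem_neighborFinset]
    rw [e1, e2] at h
    exact h
  -- fX = g + h3
  have hsplit2 : ∀ v : V, g v + h3 v = fX v := by
    intro v
    have h := Finset.card_filter_add_card_filter_not
      (s := univ.filter (fun w => G.Adj v w ∧ w ∉ F.verts)) (p := fun w => 4 ≤ G.degree w)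
    have e1 : (univ.filter (fun w => G.Adj v w ∧ w ∉ F.verts)).filter (fun w => 4 ≤ G.degree w)
        = univ.filter (fun w => G.Adj v w ∧ D4p w) := by
      ext w
      simp only [Finset.mem_filter, Finset.mem_univ, true_and, hD4p]
      tauto
    have e2 : (univ.filter (fun w => G.Adj v w ∧ w ∉ F.verts)).filter
          (fun w => ¬ (4 ≤ G.degree w))
        = univ.filter (fun w => G.Adj v w ∧ D3p w) := by
      ext w
      simp only [Finset.mem_filter, Finset.mem_univ, true_and, hD3p]
      have := hdeg3 w
      constructor
      · rintro ⟨⟨h1, h2⟩, h4⟩; exact ⟨h1, h2, by omega⟩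
      · rintro ⟨h1, h2, h3⟩; exact ⟨⟨h1, h2⟩, by omega⟩
    rw [e1, e2] at h
    exact h
  -- fX ≤ 3 outside F
  have hfX3 : ∀ v ∉ F.verts, fX v ≤ 3 := by
    intro v hv
    have h := hmax3 v hv
    rw [hncard] at h
    exact le_trans (le_of_eq (hcardeq _ _ _)) h
  -- (Key C) each D4 vertex sends an edge to F
  have hKeyC : ∀ v ∈ D4, 1 ≤ f v := by
    intro v hv
    rw [hD4, mem_filter] at hv
    obtain ⟨-, hv1, hv2⟩ := hv
    have := hsplit1 v
    have := hfX3 v hv1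
    omega
  -- (Key B) total number of F–X edges is at most 2 * #L
  have hKeyB : ∑ v ∈ X, f v ≤ 2 * #L := by
    have hswap := sum_card_swap (fun v w => G.Adj v w ∧ w ∈ F.verts) X
    rw [hf]
    rw [show (∑ v ∈ X, #(univ.filter (fun w => G.Adj v w ∧ w ∈ F.verts)))
        = ∑ w : V, #(X.filter (fun v => G.Adj v w ∧ w ∈ F.verts)) from hswap]
    have hbound : ∀ w : V, #(X.filter (fun v => G.Adj v w ∧ w ∈ F.verts))
        ≤ if w ∈ L then 2 else 0 := by
      intro w
      by_cases hwF : w ∈ F.verts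
      · rcases hbushy w hwF with hleaf | hint
        · have hwL : w ∈ L := by
            rw [hL, mem_filter]
            exact ⟨mem_univ w, hwF, hleaf⟩
          rw [if_pos hwL]
          have hsub : X.filter (fun v => G.Adj v w ∧ w ∈ F.verts)
              ⊆ univ.filter (fun u => G.Adj w u ∧ u ∉ F.verts) := by
            intro v hv
            rw [hX] at hv
            simp only [Finset.mem_filter, Finset.mem_univ, true_and] at hv ⊢
            exact ⟨hv.2.1.symm, hv.1⟩
          have h2 := hmax2 w hwF hleaf
          rw [hncard] at h2
          exact le_trans (Finset.card_le_card hsub) (le_trans (le_of_eq (hcardeq _ _ _)) h2)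
        · have hempty : X.filter (fun v => G.Adj v w ∧ w ∈ F.verts) = ∅ := by
            rw [Finset.filter_eq_empty_iff]
            intro v hv
            rw [hX, mem_filter] at hv
            rintro ⟨hadj, -⟩
            exact hv.2 (hmax1 w hwF (by omega) v hadj.symm)
          rw [hempty]
          simp
      · have hempty : X.filter (fun v => G.Adj v w ∧ w ∈ F.verts) = ∅ := by
          rw [Finset.filter_eq_empty_iff]
          intro v hv
          rintro ⟨-, hwf⟩
          exact hwF hwf
        rw [hempty]
        simp
    calc ∑ w : V, #(X.filter (fun v => G.Adj v w ∧ w ∈ F.verts))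
        ≤ ∑ w : V, (if w ∈ L then 2 else 0) := Finset.sum_le_sum (fun w _ => hbound w)
      _ = 2 * #L := by
          rw [Finset.sum_ite_mem]
          simp [Finset.univ_inter, Finset.sum_const, mul_comm]
  -- (Key D) edges from D3 to D4 are at most 3 * #D4
  have hKeyD : ∑ v ∈ D3, g v ≤ 3 * #D4 := by
    have hswap := sum_card_swap (fun v w => G.Adj v w ∧ D4p w) D3
    rw [hg]
    rw [show (∑ v ∈ D3, #(univ.filter (fun w => G.Adj v w ∧ D4p w)))
        = ∑ w : V, #(D3.filter (fun v => G.Adj v w ∧ D4p w)) from hswap]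
    have hbound : ∀ w : V, #(D3.filter (fun v => G.Adj v w ∧ D4p w))
        ≤ if w ∈ D4 then 3 else 0 := by
      intro w
      by_cases hw : w ∈ D4
      · rw [if_pos hw]
        rw [hD4, mem_filter, hD4p] at hw
        have hsub : D3.filter (fun v => G.Adj v w ∧ D4p w)
            ⊆ univ.filter (fun u => G.Adj w u ∧ u ∉ F.verts) := by
          intro v hv
          rw [hD3] at hv
          simp only [Finset.mem_filter, Finset.mem_univ, true_and, hD3p] at hv ⊢
          exact ⟨hv.2.1.symm, hv.1.1⟩
        have h3' := hmax3 w hw.2.1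
        rw [hncard] at h3'
        exact le_trans (Finset.card_le_card hsub) (le_trans (le_of_eq (hcardeq _ _ _)) h3')
      · have hempty : D3.filter (fun v => G.Adj v w ∧ D4p w) = ∅ := by
          rw [Finset.filter_eq_empty_iff]
          intro v hv
          rintro ⟨-, hw4⟩
          exact hw (by rw [hD4, mem_filter]; exact ⟨mem_univ w, hw4⟩)
        rw [hempty]
        simp
    calc ∑ w : V, #(D3.filter (fun v => G.Adj v w ∧ D4p w))
        ≤ ∑ w : V, (if w ∈ D4 then 3 else 0) := Finset.sum_le_sum (fun w _ => hbound w)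
      _ = 3 * #D4 := by
          rw [Finset.sum_ite_mem]
          simp [Finset.univ_inter, Finset.sum_const, mul_comm]
  -- H is acyclic
  have hHac : H.IsAcyclic := by
    intro x c hc
    have hx : D3p x := by
      cases c with
      | nil => exact absurd rfl hc.ne_nil
      | cons h q => exact ((hHadj _ _).mp h).2.1
    have hsupp : ∀ u ∈ c.support, u ∈ {u : V | D3p u} :=
      walk_support_subset (fun u _ w hw => ((hHadj u w).mp hw).2.2) c hx
    obtain ⟨u, hu, hdeg⟩ := hnocycle x (c.mapLe hHG) (hc.mapLe hHG)
    have hu' : u ∈ c.support := by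
      simpa [SimpleGraph.Walk.mapLe, SimpleGraph.Walk.support_map] using hu
    exact hdeg (hsupp u hu').2
  -- h3 counts H-degrees on D3
  have hHdeg : ∀ v ∈ D3, H.degree v = h3 v := by
    intro v hv
    rw [hD3, mem_filter] at hv
    have : H.neighborFinset v = univ.filter (fun w => G.Adj v w ∧ D3p w) := by
      ext w
      simp only [SimpleGraph.mem_neighborFinset, Finset.mem_filter, Finset.mem_univ, true_and,
        hHadj]
      tauto
    rw [SimpleGraph.degree, this, hh3]
  -- (Key E) component bound
  have hD3closed : ∀ u ∈ D3, ∀ w, H.Adj u w → w ∈ D3 := by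
    intro u hu w hw
    rw [hD3, mem_filter]
    exact ⟨mem_univ w, ((hHadj u w).mp hw).2.2⟩
  have hKeyE : 9 * #D3 ≤ 7 * ∑ v ∈ D3, (f v + g v) := by
    apply component_partition H (fun v => f v + g v) D3 ?_ D3 subset_rfl hD3closed
    intro S hSD3 hSclosed hex
    obtain ⟨v, hvS, hreach⟩ := hex
    show 9 * #S ≤ 7 * ∑ u ∈ S, (f u + g u)
    -- coerce to sets
    have hSclosed' : ∀ u ∈ (↑S : Set V), ∀ w, H.Adj u w → w ∈ (↑S : Set V) := by
      intro u hu w hw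
      exact hSclosed u hu w hw
    have hHconn : (H.induce (↑S : Set V)).Connected :=
      induce_connected_of_closed (v := v) hvS (fun u hu => hreach u hu) hSclosed'
    have hGconn : (G.induce (↑S : Set V)).Connected := by
      refine hHconn.mono ?_
      intro a b hab
      exact hHG hab
    have hS3 : ∀ u ∈ (↑S : Set V), G.degree u = 3 := by
      intro u hu
      have := hSD3 hu
      rw [hD3, mem_filter] at this
      exact this.2.2
    have hk7 : #S ≤ 7 := by
      have := htree (↑S) hS3 hGconn
      rwa [Set.ncard_coe_finset] at this
    -- the induced graph is a tree
    have hIac : (H.induce (↑S : Set V)).IsAcyclic := by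
      intro x c hc
      have := hc.map (f := (SimpleGraph.Embedding.induce (G := H) (↑S : Set V)).toHom)
        (SimpleGraph.Embedding.induce (G := H) (↑S : Set V)).injective
      exact hHac _ this
    have hTree : (H.induce (↑S : Set V)).IsTree := ⟨hHconn, hIac⟩
    have hedge := hTree.card_edgeFinset
    have hdegsum := SimpleGraph.sum_degrees_eq_twice_card_edges (H.induce (↑S : Set V))
    -- transfer degrees
    have hdegtr : ∀ u : (↑S : Set V), (H.induce (↑S : Set V)).degree u = H.degree u.1 := by
      intro u
      rw [← SimpleGraph.card_neighborSet_eq_degree, ← SimpleGraph.card_neighborSet_eq_degree]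
      apply Fintype.card_congr
      exact {
        toFun := fun w => ⟨w.1.1, w.2⟩
        invFun := fun w => ⟨⟨w.1, hSclosed u.1 u.2 w.1 w.2⟩, w.2⟩
        left_inv := fun w => by ext; rfl
        right_inv := fun w => by ext; rfl }
    have hsum1 : ∑ u : (↑S : Set V), (H.induce (↑S : Set V)).degree u
        = ∑ u ∈ S, H.degree u := by
      rw [Finset.sum_congr rfl (fun u _ => hdegtr u)]
      exact Finset.sum_coe_sort S (fun u => H.degree u)
    have hcardS : Fintype.card (↑S : Set V) = #S := by
      simp
    have hdeg3S : ∀ u ∈ S, f u + g u + H.degree u = 3 := by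
      intro u hu
      have hu3 := hSD3 hu
      rw [hHdeg u hu3]
      rw [hD3, mem_filter] at hu3
      have h1 := hsplit1 u
      have h2 := hsplit2 u
      have := hu3.2.2
      omega
    have hsum2 : ∑ u ∈ S, (f u + g u + H.degree u) = 3 * #S := by
      rw [Finset.sum_congr rfl hdeg3S]
      simp [mul_comm]
    have hsum3 : ∑ u ∈ S, (f u + g u + H.degree u)
        = ∑ u ∈ S, (f u + g u) + ∑ u ∈ S, H.degree u := by
      rw [← Finset.sum_add_distrib]
    have hdegS : ∑ u ∈ S, H.degree u + 2 = 2 * #S := by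
      rw [← hsum1, hdegsum]
      omega
    omega
  -- assembly
  have hXD3 : X.filter (fun v => G.degree v = 3) = D3 := by
    ext v
    simp only [hX, hD3, Finset.mem_filter, Finset.mem_univ, true_and, hD3p]
  have hXD4 : X.filter (fun v => ¬ G.degree v = 3) = D4 := by
    ext v
    simp only [hX, hD4, Finset.mem_filter, Finset.mem_univ, true_and, hD4p]
    have := hdeg3 v
    constructor
    · rintro ⟨h1, h2⟩; exact ⟨h1, by omega⟩
    · rintro ⟨h1, h2⟩; exact ⟨h1, by omega⟩
  have hXsplit : #D3 + #D4 = #X := by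
    rw [← hXD3, ← hXD4]
    exact Finset.card_filter_add_card_filter_not _
  have hBsplit : ∑ v ∈ D3, f v + ∑ v ∈ D4, f v = ∑ v ∈ X, f v := by
    rw [← hXD3, ← hXD4]
    exact Finset.sum_filter_add_sum_filter_not _ _ _
  have hb4 : #D4 ≤ ∑ v ∈ D4, f v := by
    calc #D4 = ∑ _v ∈ D4, 1 := by simp
      _ ≤ ∑ v ∈ D4, f v := Finset.sum_le_sum hKeyC
  have hsumsplit : ∑ v ∈ D3, (f v + g v) = ∑ v ∈ D3, f v + ∑ v ∈ D3, g v :=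
    Finset.sum_add_distrib
  -- convert goal
  have hgoal1 : (F.vertsᶜ).ncard = #X := by
    rw [show F.vertsᶜ = {v | v ∉ F.verts} from rfl, hncard]
    exact hcardeq _ _ _
  have hgoal2 : {v ∈ F.verts | (F.neighborSet v).ncard = 1}.ncard = #L := by
    rw [show {v ∈ F.verts | (F.neighborSet v).ncard = 1}
        = {v | v ∈ F.verts ∧ (F.neighborSet v).ncard = 1} from rfl, hncard]
    exact hcardeq _ _ _
  rw [hgoal1, hgoal2]
  omega
end
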